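/- arXiv:2208.00297 — 8 statements merged into one kernel-verified Lean document; each statement's English description precedes it below -/
import Mathlib

section
/- Suppose ((P^{(k)})_k, (Γ_y)_{y=0}^{C}) is P1-feasible for threshold ζ. Define α^{(k)}_i = 1 − (1/C) ∑_{y=0}^{C} y · q^{(k)}_{i, C−y}, γ_0 = (1/C) ∑_{y=0}^{C} (C−y) · Γ_y and γ_1 = (1/C) ∑_{y=0}^{C} y · Γ_y. Then ((α^{(k)}_i)_{k,i}, γ_0, γ_1) is P2-feasible for the same threshold ζ, and its objective Ω₂ = ∑_k ∑_i pg_k · p_i · (1 − α^{(k)}_i) equals the communication cost Ω of the P1-feasible point. -/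
/-- The set of feasible chunk placements:
`F = {z : Fin N → ℕ | (∀ i, z i ≤ C) ∧ ∑ i, z i = M·C}`, encoded with values in
`Fin (C+1)` (so the bound `z i ≤ C` is automatic). -/
def Feas (N C M : ℕ) : Finset (Fin N → Fin (C + 1)) :=
  Finset.univ.filter fun z => ∑ i, (z i : ℕ) = M * C

/-- `qprob P i x = ∑_{z ∈ F, z i = x} P z`, the probability of caching exactly
`x` chunks of file `i` under the cache placement distribution `P`. -/
def qprob (N C M : ℕ) (P : (Fin N → Fin (C + 1)) → ℝ) (i : Fin N) (x : ℕ) : ℝ :=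
  ∑ z ∈ (Feas N C M).filter (fun z => (z i : ℕ) = x), P z

/-- `P` is a pmf on the feasible placement set `F`. -/
def IsPmfOnFeas (N C M : ℕ) (P : (Fin N → Fin (C + 1)) → ℝ) : Prop :=
  (∀ z ∈ Feas N C M, 0 ≤ P z) ∧ ∑ z ∈ Feas N C M, P z = 1

/-- The communication cost
`Ω = (1/C) ∑_k ∑_i ∑_{y=0}^{C} pg_k · p_i · y · q^{(k)}_{i, C−y}`. -/
noncomputable def commCost (N K C M : ℕ) (p : Fin N → ℝ) (pg : Fin K → ℝ)
    (P : Fin K → (Fin N → Fin (C + 1)) → ℝ) : ℝ :=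
  (1 / (C : ℝ)) * ∑ k : Fin K, ∑ i : Fin N, ∑ y ∈ Finset.range (C + 1),
    pg k * p i * (y : ℝ) * qprob N C M (P k) i (C - y)

/-- P1-feasibility: each `P^{(k)}` is a pmf on `F`,
`Γ_y ≥ p_i · pg_k · q^{(k)}_{i,C−y}` for all `k, i, y ∈ {0,…,C}`, and
`1 − ∑_{y=0}^{C} Γ_y ≥ ζ`. -/
def P1Feasible (N K C M : ℕ) (p : Fin N → ℝ) (pg : Fin K → ℝ) (ζ : ℝ)
    (P : Fin K → (Fin N → Fin (C + 1)) → ℝ) (Γ : ℕ → ℝ) : Prop :=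
  (∀ k, IsPmfOnFeas N C M (P k)) ∧
  (∀ (k : Fin K) (i : Fin N), ∀ y ∈ Finset.range (C + 1),
    Γ y ≥ p i * pg k * qprob N C M (P k) i (C - y)) ∧
  1 - ∑ y ∈ Finset.range (C + 1), Γ y ≥ ζ

/-- P2-feasibility: `0 ≤ α^{(k)}_i ≤ 1`, `∑_i α^{(k)}_i = M` for every `k`,
`γ_0 ≥ pg_k · p_i · α^{(k)}_i`, `γ_1 ≥ pg_k · p_i · (1 − α^{(k)}_i)`, and
`1 − γ_0 − γ_1 ≥ ζ`. -/
def P2Feasible (N K M : ℕ) (p : Fin N → ℝ) (pg : Fin K → ℝ) (ζ : ℝ)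
    (α : Fin K → Fin N → ℝ) (γ0 γ1 : ℝ) : Prop :=
  (∀ k i, 0 ≤ α k i ∧ α k i ≤ 1) ∧
  (∀ k, ∑ i, α k i = (M : ℝ)) ∧
  (∀ k i, γ0 ≥ pg k * p i * α k i) ∧
  (∀ k i, γ1 ≥ pg k * p i * (1 - α k i)) ∧
  1 - γ0 - γ1 ≥ ζ

/-
Write `v_y = q^{(k)}_{i,C−y}` for the distribution of the number of missing chunks of file `i`.
As `∑ v_y = 1`, `α = 1 − (1/C)∑ y v_y = (1/C)∑ (C−y) v_y`, so averaging the bounds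
`Γ_y ≥ p_i pg_k v_y` with the nonnegative weights `C − y` and `y` gives the `γ_0`- and
`γ_1`-bounds, while `γ_0 + γ_1 = ∑ Γ_y`. Since every placement caches exactly `M·C` chunks, the
mean cached fractions satisfy `∑_i α^{(k)}_i = M`.
-/

open Finset

lemma sum_range_reflect_mul (C : ℕ) (g : ℝ → ℝ) (w : ℕ → ℝ) :
    ∑ y ∈ range (C + 1), g y * w (C - y) = ∑ x ∈ range (C + 1), g (C - x) * w x := by
  rw [← sum_range_reflect]
  refine sum_congr rfl fun y hy => ?_
  have hyC : y ≤ C := Nat.lt_succ_iff.mp (mem_range.mp hy)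
  rw [Nat.add_sub_cancel, Nat.sub_sub_self hyC, Nat.cast_sub hyC]

lemma sum_mul_le_sum_mul_of_le {ι : Type*} {s : Finset ι} {g v Γ : ι → ℝ} (c : ℝ)
    (hg : ∀ y ∈ s, 0 ≤ g y) (h : ∀ y ∈ s, c * v y ≤ Γ y) :
    c * ∑ y ∈ s, g y * v y ≤ ∑ y ∈ s, g y * Γ y := by
  rw [mul_sum]
  refine sum_le_sum fun y hy => ?_
  calc c * (g y * v y) = g y * (c * v y) := by ring
    _ ≤ g y * Γ y := mul_le_mul_of_nonneg_left (h y hy) (hg y hy)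

lemma one_sub_mean_div_eq {C : ℕ} (hC : (C : ℝ) ≠ 0) {v : ℕ → ℝ}
    (hv : ∑ y ∈ range (C + 1), v y = 1) :
    1 - 1 / (C : ℝ) * ∑ y ∈ range (C + 1), (y : ℝ) * v y
      = 1 / (C : ℝ) * ∑ y ∈ range (C + 1), ((C : ℝ) - y) * v y := by
  simp only [sub_mul, sum_sub_distrib, ← mul_sum, hv]
  field_simp

lemma div_sum_sub_mul_add_div_sum_mul {C : ℕ} (hC : (C : ℝ) ≠ 0) (Γ : ℕ → ℝ) :
    1 / (C : ℝ) * ∑ y ∈ range (C + 1), ((C : ℝ) - y) * Γ y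
      + 1 / (C : ℝ) * ∑ y ∈ range (C + 1), (y : ℝ) * Γ y = ∑ y ∈ range (C + 1), Γ y := by
  rw [← mul_add, ← sum_add_distrib]
  simp only [← add_mul, sub_add_cancel, ← mul_sum]
  field_simp

section Placement

variable {N C M : ℕ} {P : (Fin N → Fin (C + 1)) → ℝ}

lemma sum_range_mul_qprob (i : Fin N) (f : ℕ → ℝ) :
    ∑ x ∈ range (C + 1), f x * qprob N C M P i x = ∑ z ∈ Feas N C M, f (z i) * P z := by
  rw [← sum_fiberwise_of_maps_to (g := fun z => (z i : ℕ)) (t := range (C + 1))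
    (fun z _ => mem_range.mpr (z i).isLt) fun z => f (z i) * P z]
  refine sum_congr rfl fun x _ => ?_
  rw [qprob, mul_sum]
  exact sum_congr rfl fun z hz => by rw [(mem_filter.mp hz).2]

lemma qprob_nonneg (hP : IsPmfOnFeas N C M P) (i : Fin N) (x : ℕ) :
    0 ≤ qprob N C M P i x :=
  sum_nonneg fun z hz => hP.1 z (mem_of_mem_filter z hz)

lemma sum_qprob_reflect (hP : IsPmfOnFeas N C M P) (i : Fin N) :
    ∑ y ∈ range (C + 1), qprob N C M P i (C - y) = 1 := by
  calc ∑ y ∈ range (C + 1), qprob N C M P i (C - y)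
      = ∑ x ∈ range (C + 1), qprob N C M P i x := by
        simpa using sum_range_reflect_mul C (fun _ => 1) (qprob N C M P i)
    _ = ∑ z ∈ Feas N C M, P z := by simpa using sum_range_mul_qprob (M := M) (P := P) i 1
    _ = 1 := hP.2

lemma sum_sum_mul_qprob (hP : IsPmfOnFeas N C M P) :
    ∑ i, ∑ x ∈ range (C + 1), (x : ℝ) * qprob N C M P i x = M * C := by
  simp only [sum_range_mul_qprob (f := fun x => (x : ℝ))]
  rw [sum_comm, ← mul_one ((M : ℝ) * C), ← hP.2, mul_sum]
  refine sum_congr rfl fun z hz => ?_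
  rw [← sum_mul]
  congr 1
  exact_mod_cast (mem_filter.mp hz).2

end Placement

theorem stmt1_general (N K C M : ℕ) (hC : 1 ≤ C)
    (p : Fin N → ℝ)
    (pg : Fin K → ℝ)
    (ζ : ℝ) (P : Fin K → (Fin N → Fin (C + 1)) → ℝ) (Γ : ℕ → ℝ)
    (hfeas : P1Feasible N K C M p pg ζ P Γ)
    (α : Fin K → Fin N → ℝ)
    (hα : ∀ k i, α k i =
      1 - (1 / (C : ℝ)) * ∑ y ∈ Finset.range (C + 1),
        (y : ℝ) * qprob N C M (P k) i (C - y))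
    (γ0 γ1 : ℝ)
    (hγ0 : γ0 = (1 / (C : ℝ)) * ∑ y ∈ Finset.range (C + 1), ((C : ℝ) - (y : ℝ)) * Γ y)
    (hγ1 : γ1 = (1 / (C : ℝ)) * ∑ y ∈ Finset.range (C + 1), (y : ℝ) * Γ y) :
    P2Feasible N K M p pg ζ α γ0 γ1 ∧
    ∑ k : Fin K, ∑ i : Fin N, pg k * p i * (1 - α k i)
      = commCost N K C M p pg P := by
  obtain ⟨hP, hΓ, hζ⟩ := hfeas
  have hC0 : (C : ℝ) ≠ 0 := by positivity
  have hCinv : (0 : ℝ) ≤ 1 / C := by positivity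
  have hα' : ∀ k i, α k i =
      1 / (C : ℝ) * ∑ y ∈ range (C + 1), ((C : ℝ) - y) * qprob N C M (P k) i (C - y) :=
    fun k i => by rw [hα, one_sub_mean_div_eq hC0 (sum_qprob_reflect (hP k) i)]
  have hyC : ∀ y ∈ range (C + 1), (y : ℝ) ≤ C :=
    fun y hy => by exact_mod_cast Nat.lt_succ_iff.mp (mem_range.mp hy)
  refine ⟨⟨fun k i => ⟨?_, ?_⟩, fun k => ?_, fun k i => ?_, fun k i => ?_, ?_⟩, ?_⟩
  · rw [hα']
    exact mul_nonneg hCinv (sum_nonneg fun y hy =>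
      mul_nonneg (sub_nonneg.mpr (hyC y hy)) (qprob_nonneg (hP k) i _))
  · rw [hα]
    exact sub_le_self _ (mul_nonneg hCinv (sum_nonneg fun y _ =>
      mul_nonneg y.cast_nonneg (qprob_nonneg (hP k) i _)))
  · calc ∑ i, α k i
        = 1 / (C : ℝ) * ∑ i, ∑ x ∈ range (C + 1), (x : ℝ) * qprob N C M (P k) i x := by
          simp only [hα', sum_range_reflect_mul C (fun t => (C : ℝ) - t), sub_sub_cancel,
            mul_sum]
      _ = M := by rw [sum_sum_mul_qprob (hP k)]; field_simp
  · rw [hγ0, hα', mul_comm (pg k), mul_left_comm]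
    exact mul_le_mul_of_nonneg_left
      (sum_mul_le_sum_mul_of_le _ (fun y hy => sub_nonneg.mpr (hyC y hy)) (hΓ k i)) hCinv
  · rw [hγ1, hα, sub_sub_cancel, mul_comm (pg k), mul_left_comm]
    exact mul_le_mul_of_nonneg_left
      (sum_mul_le_sum_mul_of_le _ (fun y _ => y.cast_nonneg) (hΓ k i)) hCinv
  · rw [hγ0, hγ1, sub_sub, div_sum_sub_mul_add_div_sum_mul hC0]
    exact hζ
  · simp only [commCost, hα, sub_sub_cancel, mul_sum]
    exact sum_congr rfl fun k _ => sum_congr rfl fun i _ => sum_congr rfl fun y _ => by ring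

/-- Lemma 1, first step: a P1-feasible point yields a P2-feasible point with
the same communication cost, via
`α^{(k)}_i = 1 − (1/C) ∑_{y=0}^{C} y · q^{(k)}_{i,C−y}`,
`γ_0 = (1/C) ∑_{y=0}^{C} (C−y) · Γ_y` and `γ_1 = (1/C) ∑_{y=0}^{C} y · Γ_y`. -/
theorem stmt1 (N K C M : ℕ) (hN : 1 ≤ N) (hK : 1 ≤ K) (hC : 1 ≤ C)
    (hM : 1 ≤ M) (hMN : M ≤ N)
    (p : Fin N → ℝ) (hp0 : ∀ i, 0 ≤ p i) (hp1 : ∑ i, p i = 1)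
    (pg : Fin K → ℝ) (hpg0 : ∀ k, 0 ≤ pg k) (hpg1 : ∑ k, pg k = 1)
    (ζ : ℝ) (P : Fin K → (Fin N → Fin (C + 1)) → ℝ) (Γ : ℕ → ℝ)
    (hfeas : P1Feasible N K C M p pg ζ P Γ)
    (α : Fin K → Fin N → ℝ)
    (hα : ∀ k i, α k i =
      1 - (1 / (C : ℝ)) * ∑ y ∈ Finset.range (C + 1),
        (y : ℝ) * qprob N C M (P k) i (C - y))
    (γ0 γ1 : ℝ)
    (hγ0 : γ0 = (1 / (C : ℝ)) * ∑ y ∈ Finset.range (C + 1), ((C : ℝ) - (y : ℝ)) * Γ y)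
    (hγ1 : γ1 = (1 / (C : ℝ)) * ∑ y ∈ Finset.range (C + 1), (y : ℝ) * Γ y) :
    P2Feasible N K M p pg ζ α γ0 γ1 ∧
    ∑ k : Fin K, ∑ i : Fin N, pg k * p i * (1 - α k i)
      = commCost N K C M p pg P :=
  stmt1_general N K C M hC p pg ζ P Γ hfeas α hα γ0 γ1 hγ0 hγ1
end

section
/- Let N and M be natural numbers with M ≤ N, and let α : Fin N → ℝ satisfy 0 ≤ α_i ≤ 1 for every i and ∑_{i} α_i = M. Then there exists a probability mass function Q on the collection of M-element subsets of Fin N (i.e., Q S ≥ 0 and ∑_{S : |S| = M} Q S = 1) such that for every i ∈ Fin N, ∑_{S : |S| = M, i ∈ S} Q S = α_i. -/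
/-!
The feasible marginals form the hypersimplex `{α ∈ [0,1]^N | ∑ α = M}`, a compact convex set,
and the realizable marginals form a convex set containing every indicator vector of an
`M`-set (realized by a point mass). An extreme point of the hypersimplex has no fractional
coordinate: since `∑ α` is an integer, a fractional coordinate `j` comes with a second one `i`,
and then `α ± ε (eᵢ - eⱼ)` stay feasible for small `ε > 0`. Hence the extreme points are the
finitely many indicator vectors of `M`-sets, and by Krein–Milman the hypersimplex is their
convex hull.
-/

open Finset

theorem sum_eq_card_filter_eq_one {ι R : Type*} [AddCommMonoidWithOne R] [DecidableEq R]
    {s : Finset ι} {α : ι → R} (hα : ∀ i ∈ s, α i = 0 ∨ α i = 1) :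
    ∑ i ∈ s, α i = #(s.filter (α · = 1)) := by
  rw [← sum_boole]
  refine sum_congr rfl fun i hi => ?_
  rcases hα i hi with h | h <;> simp [h]

theorem eq_or_eq_of_mem_Icc_of_notMem_Ioo {α : Type*} [LinearOrder α] {a b x : α}
    (h : x ∈ Set.Icc a b) (h' : x ∉ Set.Ioo a b) : x = a ∨ x = b := by
  have : x ∈ Set.Icc a b \ Set.Ioo a b := ⟨h, h'⟩
  rwa [Set.Icc_sdiff_Ioo_same (h.1.trans h.2), Set.mem_insert_iff, Set.mem_singleton_iff] at this

section Hypersimplex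

variable {ι : Type*} [Fintype ι]

def hypersimplex (ι : Type*) [Fintype ι] (M : ℕ) : Set (ι → ℝ) :=
  Set.Icc 0 1 ∩ {α | ∑ i, α i = M}

theorem isCompact_hypersimplex (M : ℕ) : IsCompact (hypersimplex ι M) :=
  isCompact_Icc.inter_right (isClosed_eq (by fun_prop) continuous_const)

theorem convex_hypersimplex (M : ℕ) : Convex ℝ (hypersimplex ι M) := by
  refine (convex_Icc 0 1).inter fun β hβ γ hγ a b _ _ hab => ?_
  simp only [Set.mem_ofPred_eq, Pi.add_apply, Pi.smul_apply, smul_eq_mul, sum_add_distrib,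
    ← mul_sum] at hβ hγ ⊢
  rw [hβ, hγ, ← add_mul, hab, one_mul]

theorem exists_ne_mem_Ioo_of_mem_hypersimplex {M : ℕ} {α : ι → ℝ} (hα : α ∈ hypersimplex ι M)
    {j : ι} (hj : α j ∈ Set.Ioo 0 1) : ∃ i ≠ j, α i ∈ Set.Ioo 0 1 := by
  classical
  by_contra! h
  have hsum : ∑ i ∈ univ.erase j, α i + α j = M := by
    rw [sum_erase_add _ _ (mem_univ j)]; exact hα.2
  rw [sum_eq_card_filter_eq_one fun i hi => eq_or_eq_of_mem_Icc_of_notMem_Ioo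
    ⟨hα.1.1 i, hα.1.2 i⟩ (h i (ne_of_mem_erase hi))] at hsum
  set c := #((univ.erase j).filter (α · = 1))
  have hlt : c < M := by exact_mod_cast (show (c : ℝ) < M by linarith [hj.1])
  have hgt : M < c + 1 := by exact_mod_cast (show (M : ℝ) < c + 1 by linarith [hj.2])
  omega

variable [DecidableEq ι]

theorem add_smul_single_sub_single_mem_hypersimplex {M : ℕ} {α : ι → ℝ}
    (hα : α ∈ hypersimplex ι M) {i j : ι} (hij : i ≠ j) {t : ℝ} (hi : α i + t ∈ Set.Icc 0 1)
    (hj : α j - t ∈ Set.Icc 0 1) :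
    α + t • (Pi.single i 1 - Pi.single j 1) ∈ hypersimplex ι M := by
  have happly (k : ι) : (α + t • (Pi.single i 1 - Pi.single j 1) : ι → ℝ) k =
      if k = i then α i + t else if k = j then α j - t else α k := by
    split_ifs <;> subst_vars <;> simp [*, sub_eq_add_neg]
  refine ⟨⟨fun k => ?_, fun k => ?_⟩, ?_⟩
  · rw [happly]; split_ifs; exacts [hi.1, hj.1, hα.1.1 k]
  · rw [happly]; split_ifs; exacts [hi.2, hj.2, hα.1.2 k]
  · simp [sum_add_distrib, ← mul_sum, sum_sub_distrib, hα.2.out]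

theorem forall_eq_zero_or_eq_one_of_mem_extremePoints_hypersimplex {M : ℕ} {α : ι → ℝ}
    (hα : α ∈ (hypersimplex ι M).extremePoints ℝ) (j : ι) : α j = 0 ∨ α j = 1 := by
  refine eq_or_eq_of_mem_Icc_of_notMem_Ioo ⟨hα.1.1.1 j, hα.1.1.2 j⟩ fun hj => ?_
  obtain ⟨i, hij, hi⟩ := exists_ne_mem_Ioo_of_mem_hypersimplex hα.1 hj
  set ε := min (min (α i) (1 - α i)) (min (α j) (1 - α j))
  have hε : 0 < ε := by
    simp only [ε, lt_min_iff, sub_pos]; exact ⟨⟨hi.1, hi.2⟩, hj.1, hj.2⟩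
  have hεi : ε ≤ α i ∧ ε ≤ 1 - α i := ⟨(min_le_left _ _).trans (min_le_left _ _),
    (min_le_left _ _).trans (min_le_right _ _)⟩
  have hεj : ε ≤ α j ∧ ε ≤ 1 - α j := ⟨(min_le_right _ _).trans (min_le_left _ _),
    (min_le_right _ _).trans (min_le_right _ _)⟩
  set d : ι → ℝ := Pi.single i 1 - Pi.single j 1
  have hplus : α + ε • d ∈ hypersimplex ι M :=
    add_smul_single_sub_single_mem_hypersimplex hα.1 hij
      ⟨by linarith, by linarith⟩ ⟨by linarith, by linarith⟩
  have hminus : α - ε • d ∈ hypersimplex ι M := by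
    rw [sub_eq_add_neg, ← neg_smul]
    exact add_smul_single_sub_single_mem_hypersimplex hα.1 hij
      ⟨by linarith, by linarith⟩ ⟨by linarith, by linarith⟩
  have := congrFun (hα.2 hplus hminus (mem_openSegment_add_sub α (ε • d))) i
  simp [d, hij] at this
  exact hε.ne' this

def IsInclusionMarginal (M : ℕ) (α : ι → ℝ) : Prop :=
  ∃ Q : Finset ι → ℝ, (∀ S : Finset ι, S.card = M → 0 ≤ Q S) ∧
    (∑ S ∈ univ.filter (fun S : Finset ι => S.card = M), Q S = 1) ∧
    ∀ i, ∑ S ∈ univ.filter (fun S : Finset ι => S.card = M ∧ i ∈ S), Q S = α i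

theorem convex_setOf_isInclusionMarginal (M : ℕ) :
    Convex ℝ {α : ι → ℝ | IsInclusionMarginal M α} := by
  rintro β ⟨Q, hQ₀, hQ₁, hQβ⟩ γ ⟨R, hR₀, hR₁, hRγ⟩ a b ha hb hab
  refine ⟨a • Q + b • R, fun S hS => ?_, ?_, fun i => ?_⟩
  · have := hQ₀ S hS
    have := hR₀ S hS
    simp only [Pi.add_apply, Pi.smul_apply, smul_eq_mul]
    positivity
  · simp only [Pi.add_apply, Pi.smul_apply, smul_eq_mul, sum_add_distrib, ← mul_sum, hQ₁, hR₁,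
      mul_one, hab]
  · simp [sum_add_distrib, ← mul_sum, hQβ, hRγ]

theorem isInclusionMarginal_indicator (T : Finset ι) :
    IsInclusionMarginal T.card fun i => if i ∈ T then (1 : ℝ) else 0 := by
  refine ⟨fun S => if S = T then 1 else 0, fun S _ => by positivity, ?_, fun i => ?_⟩
  · simp
  · simp [sum_ite_eq']

theorem isInclusionMarginal_of_mem_hypersimplex {M : ℕ} {α : ι → ℝ}
    (hα : α ∈ hypersimplex ι M) (h01 : ∀ i, α i = 0 ∨ α i = 1) : IsInclusionMarginal M α := by
  set T := univ.filter (α · = 1)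
  have hT : T.card = M := by
    have := hα.2.out
    rw [sum_eq_card_filter_eq_one fun i _ => h01 i] at this
    exact_mod_cast this
  have hαT : α = fun i => if i ∈ T then 1 else 0 := by
    ext i
    rcases h01 i with h | h <;> simp [T, h]
  rw [hαT, ← hT]
  exact isInclusionMarginal_indicator T

theorem hypersimplex_subset_setOf_isInclusionMarginal (M : ℕ) :
    hypersimplex ι M ⊆ {α | IsInclusionMarginal M α} := by
  set E := (hypersimplex ι M).extremePoints ℝ
  have hE01 : E ⊆ Set.univ.pi fun _ => {0, 1} := fun α hα j _ =>
    forall_eq_zero_or_eq_one_of_mem_extremePoints_hypersimplex hα j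
  have hEfin : E.Finite := (Set.Finite.pi fun _ => Set.toFinite _).subset hE01
  have hEmarg : E ⊆ {α | IsInclusionMarginal M α} := fun α hα =>
    isInclusionMarginal_of_mem_hypersimplex hα.1
      (forall_eq_zero_or_eq_one_of_mem_extremePoints_hypersimplex hα)
  rw [← closure_convexHull_extremePoints (isCompact_hypersimplex M) (convex_hypersimplex M),
    (hEfin.isCompact_convexHull ℝ).isClosed.closure_eq]
  exact convexHull_min hEmarg (convex_setOf_isInclusionMarginal M)

end Hypersimplex

theorem stmt2_general (N M : ℕ)
    (α : Fin N → ℝ) (hα01 : ∀ i, 0 ≤ α i ∧ α i ≤ 1)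
    (hαsum : ∑ i, α i = (M : ℝ)) :
    ∃ Q : Finset (Fin N) → ℝ,
      (∀ S : Finset (Fin N), S.card = M → 0 ≤ Q S) ∧
      (∑ S ∈ Finset.univ.filter (fun S : Finset (Fin N) => S.card = M), Q S = 1) ∧
      (∀ i : Fin N,
        ∑ S ∈ Finset.univ.filter
          (fun S : Finset (Fin N) => S.card = M ∧ i ∈ S), Q S = α i) :=
  hypersimplex_subset_setOf_isInclusionMarginal M
    ⟨⟨fun i => (hα01 i).1, fun i => (hα01 i).2⟩, hαsum⟩

/-- Validity of the DPC interval-filling placement strategy: per-file caching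
probabilities `α_i ∈ [0,1]` summing to `M` can be realized as the inclusion
marginals of a probability mass function `Q` on the `M`-element subsets of
`Fin N`. -/
theorem stmt2 (N M : ℕ) (hMN : M ≤ N)
    (α : Fin N → ℝ) (hα01 : ∀ i, 0 ≤ α i ∧ α i ≤ 1)
    (hαsum : ∑ i, α i = (M : ℝ)) :
    ∃ Q : Finset (Fin N) → ℝ,
      (∀ S : Finset (Fin N), S.card = M → 0 ≤ Q S) ∧
      (∑ S ∈ Finset.univ.filter (fun S : Finset (Fin N) => S.card = M), Q S = 1) ∧
      (∀ i : Fin N,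
        ∑ S ∈ Finset.univ.filter
          (fun S : Finset (Fin N) => S.card = M ∧ i ∈ S), Q S = α i) :=
  stmt2_general N M α hα01 hαsum
end

section
/- Suppose ((α^{(k)}_i)_{k,i}, γ_0, γ_1) is P2-feasible for threshold ζ, and for each cache k let Q^{(k)} be a pmf on the M-element subsets of Fin N whose inclusion marginals equal α^{(k)} (i.e., ∑_{S ∋ i} Q^{(k)} S = α^{(k)}_i for every i). Define the pmf P^{(k)} on F by P^{(k)} z = Q^{(k)} S when z is the placement with z i = C for i ∈ S and z i = 0 otherwise, and P^{(k)} z = 0 for every placement z having some z i ∉ {0, C}; define Γ_0 = γ_0, Γ_C = γ_1, and Γ_y = 0 for 0 < y < C. Then ((P^{(k)})_k, (Γ_y)_{y=0}^{C}) is P1-feasible for the same threshold ζ, and its communication cost Ω equals the P2 objective Ω₂ = ∑_k ∑_i pg_k · p_i · (1 − α^{(k)}_i). -/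
open Finset

section Placement

variable {N C M : ℕ}

def fullPlacement (C : ℕ) (S : Finset (Fin N)) : Fin N → Fin (C + 1) :=
  fun i => if i ∈ S then Fin.last C else 0

def fullFiles (z : Fin N → Fin (C + 1)) : Finset (Fin N) :=
  univ.filter fun i => (z i : ℕ) = C

lemma val_fullPlacement (S : Finset (Fin N)) (i : Fin N) :
    (fullPlacement C S i : ℕ) = if i ∈ S then C else 0 := by
  unfold fullPlacement
  split_ifs <;> simp

lemma mem_fullFiles {z : Fin N → Fin (C + 1)} {i : Fin N} :
    i ∈ fullFiles z ↔ (z i : ℕ) = C := by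
  simp [fullFiles]

lemma fullFiles_fullPlacement (hC : 0 < C) (S : Finset (Fin N)) :
    fullFiles (fullPlacement C S) = S := by
  ext i
  rw [mem_fullFiles, val_fullPlacement]
  split_ifs <;> simp_all [hC.ne]

lemma fullPlacement_fullFiles {z : Fin N → Fin (C + 1)}
    (hz : ∀ i, (z i : ℕ) = 0 ∨ (z i : ℕ) = C) :
    fullPlacement C (fullFiles z) = z := by
  funext i
  apply Fin.val_injective
  rw [val_fullPlacement]
  simp only [mem_fullFiles]
  have := hz i
  split_ifs <;> omega

lemma fullPlacement_allOrNothing (S : Finset (Fin N)) (i : Fin N) :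
    (fullPlacement C S i : ℕ) = 0 ∨ (fullPlacement C S i : ℕ) = C := by
  rw [val_fullPlacement]
  split_ifs <;> simp

lemma sum_val_fullPlacement (S : Finset (Fin N)) :
    ∑ i, (fullPlacement C S i : ℕ) = S.card * C := by
  simp only [val_fullPlacement, sum_ite_mem, univ_inter, sum_const, smul_eq_mul]

lemma fullPlacement_mem_feas {S : Finset (Fin N)} (hS : S.card = M) :
    fullPlacement C S ∈ Feas N C M := by
  simp only [Feas, mem_filter, mem_univ, true_and, sum_val_fullPlacement, hS]

lemma card_fullFiles (hC : 0 < C) {z : Fin N → Fin (C + 1)} (hz : z ∈ Feas N C M)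
    (hzC : ∀ i, (z i : ℕ) = 0 ∨ (z i : ℕ) = C) :
    (fullFiles z).card = M := by
  rw [← fullPlacement_fullFiles hzC] at hz
  simp only [Feas, mem_filter, mem_univ, true_and, sum_val_fullPlacement] at hz
  exact Nat.eq_of_mul_eq_mul_right hC hz

lemma sum_feas_allOrNothing {β : Type*} [AddCommMonoid β] (hC : 0 < C)
    (f : Finset (Fin N) → β) :
    ∑ z ∈ Feas N C M,
        (if ∀ i, (z i : ℕ) = 0 ∨ (z i : ℕ) = C then f (fullFiles z) else 0)
      = ∑ S ∈ univ.filter (fun S : Finset (Fin N) => S.card = M), f S := by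
  rw [← sum_filter]
  refine sum_bij' (fun z _ => fullFiles z) (fun S _ => fullPlacement C S)
    (fun z hz => ?_) (fun S hS => ?_) (fun z hz => ?_) (fun S _ => ?_) (fun _ _ => rfl)
  · rw [mem_filter] at hz
    simpa using card_fullFiles hC hz.1 hz.2
  · rw [mem_filter] at hS ⊢
    exact ⟨fullPlacement_mem_feas (by simpa using hS), fullPlacement_allOrNothing S⟩
  · exact fullPlacement_fullFiles (mem_filter.mp hz).2
  · exact fullFiles_fullPlacement hC S

end Placement

section Pushforward

variable {N C M : ℕ} {Q : Finset (Fin N) → ℝ}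

def fullPlacementPmf (Q : Finset (Fin N) → ℝ) (z : Fin N → Fin (C + 1)) : ℝ :=
  if ∀ i, (z i : ℕ) = 0 ∨ (z i : ℕ) = C then Q (fullFiles z) else 0

lemma isPmfOnFeas_fullPlacementPmf (hC : 0 < C)
    (hQ0 : ∀ S : Finset (Fin N), S.card = M → 0 ≤ Q S)
    (hQ1 : ∑ S ∈ univ.filter (fun S : Finset (Fin N) => S.card = M), Q S = 1) :
    IsPmfOnFeas N C M (fullPlacementPmf Q) := by
  refine ⟨fun z hz => ?_, (sum_feas_allOrNothing hC Q).trans hQ1⟩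
  unfold fullPlacementPmf
  split_ifs with hzC
  · exact hQ0 _ (card_fullFiles hC hz hzC)
  · exact le_rfl

lemma qprob_fullPlacementPmf (hC : 0 < C) (i : Fin N) (x : ℕ) :
    qprob N C M (fullPlacementPmf Q) i x
      = ∑ S ∈ univ.filter (fun S : Finset (Fin N) => S.card = M),
          if (fullPlacement C S i : ℕ) = x then Q S else 0 := by
  rw [qprob, sum_filter,
    ← sum_feas_allOrNothing hC fun S => if (fullPlacement C S i : ℕ) = x then Q S else 0]
  refine sum_congr rfl fun z _ => ?_
  unfold fullPlacementPmf
  by_cases hzC : ∀ i, (z i : ℕ) = 0 ∨ (z i : ℕ) = C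
  · simp only [if_pos hzC, fullPlacement_fullFiles hzC]
  · simp only [if_neg hzC, ite_self]

lemma qprob_fullPlacementPmf_last (hC : 0 < C) (i : Fin N) :
    qprob N C M (fullPlacementPmf Q) i C
      = ∑ S ∈ univ.filter (fun S : Finset (Fin N) => S.card = M ∧ i ∈ S), Q S := by
  rw [qprob_fullPlacementPmf hC]
  conv_rhs => rw [← filter_filter, sum_filter]
  refine sum_congr rfl fun S _ => ?_
  by_cases hi : i ∈ S <;> simp [val_fullPlacement, hi, hC.ne]

lemma qprob_fullPlacementPmf_zero_add_last (hC : 0 < C) (i : Fin N) :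
    qprob N C M (fullPlacementPmf Q) i 0 + qprob N C M (fullPlacementPmf Q) i C
      = ∑ S ∈ univ.filter (fun S : Finset (Fin N) => S.card = M), Q S := by
  rw [qprob_fullPlacementPmf hC, qprob_fullPlacementPmf hC, ← sum_add_distrib]
  refine sum_congr rfl fun S _ => ?_
  by_cases hi : i ∈ S <;> simp [val_fullPlacement, hi, hC.ne, hC.ne']

lemma qprob_fullPlacementPmf_of_lt (hC : 0 < C) (i : Fin N) {x : ℕ} (hx0 : 0 < x)
    (hxC : x < C) :
    qprob N C M (fullPlacementPmf Q) i x = 0 := by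
  rw [qprob_fullPlacementPmf hC]
  refine sum_eq_zero fun S _ => ?_
  rw [if_neg]
  rcases fullPlacement_allOrNothing (C := C) S i with h | h <;> omega

end Pushforward

lemma sum_range_succ_eq_endpoints {β : Type*} [AddCommMonoid β] {C : ℕ} {f : ℕ → β}
    (hC : 0 < C) (hf : ∀ y, 0 < y → y < C → f y = 0) :
    ∑ y ∈ range (C + 1), f y = f 0 + f C := by
  rw [sum_range_succ, sum_eq_single_of_mem 0 (mem_range.mpr hC)]
  exact fun y hy hy0 => hf y (Nat.pos_of_ne_zero hy0) (mem_range.mp hy)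

section BinaryCaching

variable {N K C M : ℕ} {p : Fin N → ℝ} {pg : Fin K → ℝ} {α : Fin K → Fin N → ℝ}
  {P : Fin K → (Fin N → Fin (C + 1)) → ℝ}

lemma p1Feasible_of_qprob {ζ γ0 γ1 : ℝ} {Γ : ℕ → ℝ} (hC : 0 < C)
    (hpmf : ∀ k, IsPmfOnFeas N C M (P k)) (hfeas : P2Feasible N K M p pg ζ α γ0 γ1)
    (hqC : ∀ k i, qprob N C M (P k) i C = α k i)
    (hq0 : ∀ k i, qprob N C M (P k) i 0 = 1 - α k i)
    (hqmid : ∀ k i x, 0 < x → x < C → qprob N C M (P k) i x = 0)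
    (hΓ0 : Γ 0 = γ0) (hΓC : Γ C = γ1) (hΓmid : ∀ y, 0 < y → y < C → Γ y = 0) :
    P1Feasible N K C M p pg ζ P Γ := by
  obtain ⟨-, -, hγ0, hγ1, hζ⟩ := hfeas
  refine ⟨hpmf, fun k i y hy => ?_, ?_⟩
  · obtain rfl | hy0 := Nat.eq_zero_or_pos y
    · rw [hΓ0, Nat.sub_zero, hqC, mul_comm (p i)]
      exact hγ0 k i
    obtain hyC | rfl := (Nat.lt_succ_iff.mp (mem_range.mp hy)).lt_or_eq
    · rw [hΓmid y hy0 hyC, hqmid k i (C - y) (by omega) (by omega), mul_zero]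
    · rw [hΓC, Nat.sub_self, hq0, mul_comm (p i)]
      exact hγ1 k i
  · rw [sum_range_succ_eq_endpoints hC hΓmid, hΓ0, hΓC]
    linarith

lemma commCost_eq_of_qprob (hC : 0 < C)
    (hq0 : ∀ k i, qprob N C M (P k) i 0 = 1 - α k i)
    (hqmid : ∀ k i x, 0 < x → x < C → qprob N C M (P k) i x = 0) :
    commCost N K C M p pg P = ∑ k, ∑ i, pg k * p i * (1 - α k i) := by
  have hinner : ∀ k i, ∑ y ∈ range (C + 1), pg k * p i * (y : ℝ) * qprob N C M (P k) i (C - y)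
      = C * (pg k * p i * (1 - α k i)) := by
    intro k i
    rw [sum_range_succ_eq_endpoints hC fun y _ hyC => by
      rw [hqmid k i (C - y) (by omega) (by omega), mul_zero], Nat.sub_self, hq0]
    simp only [Nat.cast_zero, mul_zero, zero_mul, zero_add]
    ring
  have hCne : (C : ℝ) ≠ 0 := by exact_mod_cast hC.ne'
  simp only [commCost, hinner, ← mul_sum]
  field_simp

end BinaryCaching

theorem stmt3_general (N K C M : ℕ) (hC : 1 ≤ C)
    (p : Fin N → ℝ)
    (pg : Fin K → ℝ)
    (ζ : ℝ) (α : Fin K → Fin N → ℝ) (γ0 γ1 : ℝ)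
    (hfeas : P2Feasible N K M p pg ζ α γ0 γ1)
    (Q : Fin K → Finset (Fin N) → ℝ)
    (hQ0 : ∀ (k : Fin K) (S : Finset (Fin N)), S.card = M → 0 ≤ Q k S)
    (hQ1 : ∀ k : Fin K,
      ∑ S ∈ Finset.univ.filter (fun S : Finset (Fin N) => S.card = M), Q k S = 1)
    (hQmarg : ∀ (k : Fin K) (i : Fin N),
      ∑ S ∈ Finset.univ.filter
        (fun S : Finset (Fin N) => S.card = M ∧ i ∈ S), Q k S = α k i)
    (P : Fin K → (Fin N → Fin (C + 1)) → ℝ)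
    (hP : ∀ (k : Fin K) (z : Fin N → Fin (C + 1)),
      P k z = if ∀ i, (z i : ℕ) = 0 ∨ (z i : ℕ) = C
        then Q k (Finset.univ.filter fun i => (z i : ℕ) = C) else 0)
    (Γ : ℕ → ℝ)
    (hΓ0 : Γ 0 = γ0) (hΓC : Γ C = γ1)
    (hΓmid : ∀ y : ℕ, 0 < y → y < C → Γ y = 0) :
    P1Feasible N K C M p pg ζ P Γ ∧
    commCost N K C M p pg P
      = ∑ k : Fin K, ∑ i : Fin N, pg k * p i * (1 - α k i) := by
  obtain rfl : P = fun k => fullPlacementPmf (Q k) := funext fun k => funext (hP k)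
  have hqC : ∀ k i, qprob N C M (fullPlacementPmf (Q k)) i C = α k i := fun k i =>
    (qprob_fullPlacementPmf_last hC i).trans (hQmarg k i)
  have hq0 : ∀ k i, qprob N C M (fullPlacementPmf (Q k)) i 0 = 1 - α k i := fun k i => by
    linarith [qprob_fullPlacementPmf_zero_add_last (M := M) (Q := Q k) hC i, hQ1 k, hqC k i]
  have hqmid : ∀ k i x, 0 < x → x < C → qprob N C M (fullPlacementPmf (Q k)) i x = 0 :=
    fun k i _ => qprob_fullPlacementPmf_of_lt hC i
  have hpmf : ∀ k, IsPmfOnFeas N C M (fullPlacementPmf (Q k)) := fun k =>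
    isPmfOnFeas_fullPlacementPmf hC (hQ0 k) (hQ1 k)
  exact ⟨p1Feasible_of_qprob hC hpmf hfeas hqC hq0 hqmid hΓ0 hΓC hΓmid,
    commCost_eq_of_qprob hC hq0 hqmid⟩

/-- Lemma 1, second step: a P2-feasible point, together with pmfs `Q^{(k)}`
on the `M`-element subsets of `Fin N` whose inclusion marginals equal
`α^{(k)}`, yields a P1-feasible point whose placements cache each file either
entirely or not at all, with the same communication cost. Here `P^{(k)} z`
equals `Q^{(k)} S` when `z i = C` for `i ∈ S` and `z i = 0` otherwise, and `0`
for placements having some `z i ∉ {0, C}`; `Γ_0 = γ_0`, `Γ_C = γ_1`, and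
`Γ_y = 0` for `0 < y < C`. -/
theorem stmt3 (N K C M : ℕ) (hN : 1 ≤ N) (hK : 1 ≤ K) (hC : 1 ≤ C)
    (hM : 1 ≤ M) (hMN : M ≤ N)
    (p : Fin N → ℝ) (hp0 : ∀ i, 0 ≤ p i) (hp1 : ∑ i, p i = 1)
    (pg : Fin K → ℝ) (hpg0 : ∀ k, 0 ≤ pg k) (hpg1 : ∑ k, pg k = 1)
    (ζ : ℝ) (α : Fin K → Fin N → ℝ) (γ0 γ1 : ℝ)
    (hfeas : P2Feasible N K M p pg ζ α γ0 γ1)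
    (Q : Fin K → Finset (Fin N) → ℝ)
    (hQ0 : ∀ (k : Fin K) (S : Finset (Fin N)), S.card = M → 0 ≤ Q k S)
    (hQ1 : ∀ k : Fin K,
      ∑ S ∈ Finset.univ.filter (fun S : Finset (Fin N) => S.card = M), Q k S = 1)
    (hQmarg : ∀ (k : Fin K) (i : Fin N),
      ∑ S ∈ Finset.univ.filter
        (fun S : Finset (Fin N) => S.card = M ∧ i ∈ S), Q k S = α k i)
    (P : Fin K → (Fin N → Fin (C + 1)) → ℝ)
    (hP : ∀ (k : Fin K) (z : Fin N → Fin (C + 1)),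
      P k z = if ∀ i, (z i : ℕ) = 0 ∨ (z i : ℕ) = C
        then Q k (Finset.univ.filter fun i => (z i : ℕ) = C) else 0)
    (Γ : ℕ → ℝ)
    (hΓ0 : Γ 0 = γ0) (hΓC : Γ C = γ1)
    (hΓmid : ∀ y : ℕ, 0 < y → y < C → Γ y = 0) :
    P1Feasible N K C M p pg ζ P Γ ∧
    commCost N K C M p pg P
      = ∑ k : Fin K, ∑ i : Fin N, pg k * p i * (1 - α k i) :=
  stmt3_general N K C M hC p pg ζ α γ0 γ1 hfeas Q hQ0 hQ1 hQmarg P hP Γ hΓ0 hΓC hΓmid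
end

section
/- For every privacy threshold ζ ∈ ℝ, the set of communication costs attained by P1-feasible points equals the set of objectives attained by P2-feasible points; that is, { Ω((P^{(k)})_k) : ((P^{(k)})_k, (Γ_y)_y) is P1-feasible } = { ∑_k ∑_i pg_k · p_i · (1 − α^{(k)}_i) : ((α^{(k)}_i)_{k,i}, γ_0, γ_1) is P2-feasible } as subsets of ℝ. In particular, the chunk-based joint probabilistic caching optimization P1 and the disjoint probabilistic caching optimization P2 have the same optimal value. -/
/-!
Both problems see a placement distribution `P` only through the expected cached fractions
`α_i = E_P[z_i] / C`. The cost equals `∑ pg_k p_i (1 - α_i)`, and splitting each `Γ_y` in the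
proportions `(C - y) / C` and `y / C` gives `γ₀ ≥ pg_k p_i α_i` and `γ₁ ≥ pg_k p_i (1 - α_i)` with
`γ₀ + γ₁ = ∑ Γ_y`.

Conversely, every `α ∈ [0,1]^N` with `∑ α = M` lies in the convex hull of the `0/1` vectors with
`M` ones (the vertices of the hypersimplex): while some coordinate is fractional, integrality of the
sum provides a second one, and moving mass between the two in either direction until one of them
becomes integral writes `α` as a convex combination of two points with fewer fractional
coordinates. Hence `α` is realised by a distribution on placements caching every file entirely or
not at all; under it only `y = 0` and `y = C` carry request mass, and `Γ₀ = γ₀`, `Γ_C = γ₁` works.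
-/

open Finset

def hypersimplexVertices (ι : Type*) [Fintype ι] (M : ℕ) : Set (ι → ℝ) :=
  {v | (∀ i, v i = 0 ∨ v i = 1) ∧ ∑ i, v i = M}

section Hypersimplex

variable {ι : Type*} [Fintype ι]

noncomputable def fractionalCoords (α : ι → ℝ) : Finset ι :=
  univ.filter fun i => 0 < α i ∧ α i < 1

lemma mem_fractionalCoords {α : ι → ℝ} {i : ι} :
    i ∈ fractionalCoords α ↔ 0 < α i ∧ α i < 1 := by
  simp [fractionalCoords]

lemma eq_zero_or_eq_one_of_notMem_fractionalCoords {α : ι → ℝ} {i : ι}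
    (h01 : α i ∈ Set.Icc (0 : ℝ) 1) (hi : i ∉ fractionalCoords α) : α i = 0 ∨ α i = 1 := by
  rw [mem_fractionalCoords] at hi
  by_contra! h
  exact hi ⟨h01.1.lt_of_ne' h.1, h01.2.lt_of_ne h.2⟩

variable [DecidableEq ι]

lemma exists_ne_mem_fractionalCoords {M : ℕ} {α : ι → ℝ} (h01 : ∀ i, α i ∈ Set.Icc (0 : ℝ) 1)
    (hsum : ∑ i, α i = M) {i : ι} (hi : i ∈ fractionalCoords α) :
    ∃ j ∈ fractionalCoords α, j ≠ i := by
  by_contra! h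
  have hrest : ∑ j ∈ univ.erase i, α j = #{j ∈ univ.erase i | α j = 1} := by
    rw [← sum_boole]
    refine sum_congr rfl fun j hj => ?_
    rcases eq_zero_or_eq_one_of_notMem_fractionalCoords (h01 j)
      (fun hj' => ne_of_mem_erase hj (h j hj')) with h0 | h1 <;> simp [*]
  have hαi : α i = ((M - #{j ∈ univ.erase i | α j = 1} : ℤ) : ℝ) := by
    rw [← add_sum_erase _ _ (mem_univ i), hrest] at hsum
    push_cast
    linarith
  obtain ⟨h0, h1⟩ := mem_fractionalCoords.mp hi
  rw [hαi] at h0 h1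
  have : (0 : ℤ) < M - #{j ∈ univ.erase i | α j = 1} := by exact_mod_cast h0
  have : (M - #{j ∈ univ.erase i | α j = 1} : ℤ) < 1 := by exact_mod_cast h1
  omega

lemma exists_shift_fractionalCoords_ssubset {α : ι → ℝ} (h01 : ∀ m, α m ∈ Set.Icc (0 : ℝ) 1)
    {i j : ι} (hi : i ∈ fractionalCoords α) (hj : j ∈ fractionalCoords α) (hij : i ≠ j) :
    ∃ t : ℝ, 0 < t ∧ let β := α + t • (Pi.single i 1 - Pi.single j 1 : ι → ℝ)
      (∀ m, β m ∈ Set.Icc (0 : ℝ) 1) ∧ ∑ m, β m = ∑ m, α m ∧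
        fractionalCoords β ⊂ fractionalCoords α := by
  obtain ⟨hi0, hi1⟩ := mem_fractionalCoords.mp hi
  obtain ⟨hj0, hj1⟩ := mem_fractionalCoords.mp hj
  set t := min (1 - α i) (α j) with ht
  have hti : t ≤ 1 - α i := min_le_left _ _
  have htj : t ≤ α j := min_le_right _ _
  have ht0 : 0 < t := lt_min (by linarith) hj0
  refine ⟨t, ht0, ?_⟩
  intro β
  have hβi : β i = α i + t := by simp [β, hij]
  have hβj : β j = α j - t := by simp [β, hij.symm, sub_eq_add_neg]
  have hβm : ∀ m, m ≠ i → m ≠ j → β m = α m := by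
    intro m hmi hmj
    simp [β, hmi, hmj]
  refine ⟨?_, ?_, ?_⟩
  · intro m
    by_cases hmi : m = i
    · subst hmi; rw [hβi]; constructor <;> linarith
    by_cases hmj : m = j
    · subst hmj; rw [hβj]; constructor <;> linarith
    rw [hβm m hmi hmj]; exact h01 m
  · simp [β, sum_add_distrib, ← mul_sum, sum_sub_distrib]
  · refine ssubset_iff_of_subset (fun m hm => ?_) |>.mpr ?_
    · by_cases hmi : m = i
      · exact hmi ▸ hi
      by_cases hmj : m = j
      · exact hmj ▸ hj
      rwa [mem_fractionalCoords, hβm m hmi hmj, ← mem_fractionalCoords] at hm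
    · rcases min_choice (1 - α i) (α j) with h | h
      · refine ⟨i, hi, ?_⟩
        rw [mem_fractionalCoords, hβi, ht, h]
        simp
      · refine ⟨j, hj, ?_⟩
        rw [mem_fractionalCoords, hβj, ht, h]
        simp

theorem mem_convexHull_hypersimplexVertices {M : ℕ} {α : ι → ℝ}
    (h01 : ∀ i, α i ∈ Set.Icc (0 : ℝ) 1) (hsum : ∑ i, α i = M) :
    α ∈ convexHull ℝ (hypersimplexVertices ι M) := by
  induction hn : #(fractionalCoords α) using Nat.strong_induction_on generalizing α with
  | _ n ih =>
  obtain hempty | ⟨i, hi⟩ := (fractionalCoords α).eq_empty_or_nonempty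
  · refine subset_convexHull ℝ _ ⟨fun m => ?_, hsum⟩
    exact eq_zero_or_eq_one_of_notMem_fractionalCoords (h01 m) (by simp [hempty])
  obtain ⟨j, hj, hji⟩ := exists_ne_mem_fractionalCoords h01 hsum hi
  obtain ⟨t, ht, ht01, htsum, htlt⟩ := exists_shift_fractionalCoords_ssubset h01 hi hj hji.symm
  obtain ⟨s, hs, hs01, hssum, hslt⟩ := exists_shift_fractionalCoords_ssubset h01 hj hi hji
  have hβ := ih _ (hn ▸ card_lt_card htlt) ht01 (htsum.trans hsum) rfl
  have hβ' := ih _ (hn ▸ card_lt_card hslt) hs01 (hssum.trans hsum) rfl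
  have hst : 0 < s + t := add_pos hs ht
  convert convex_convexHull ℝ _ hβ hβ' (div_nonneg hs.le hst.le) (div_nonneg ht.le hst.le)
    (by field_simp) using 1
  ext m
  simp only [Pi.add_apply, Pi.smul_apply, Pi.sub_apply, smul_eq_mul]
  field_simp
  ring

end Hypersimplex

section Caching

variable {N C M : ℕ}

noncomputable def cachedFraction (N C M : ℕ) (P : (Fin N → Fin (C + 1)) → ℝ) (i : Fin N) : ℝ :=
  ∑ z ∈ Feas N C M, ((z i : ℕ) : ℝ) / C * P z

lemma sum_mul_qprob (P : (Fin N → Fin (C + 1)) → ℝ) (i : Fin N) (f : ℕ → ℝ) :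
    ∑ x ∈ range (C + 1), f x * qprob N C M P i x = ∑ z ∈ Feas N C M, f (z i) * P z := by
  calc ∑ x ∈ range (C + 1), f x * qprob N C M P i x
      = ∑ x ∈ range (C + 1), ∑ z ∈ Feas N C M with (z i : ℕ) = x, f (z i) * P z := by
        refine sum_congr rfl fun x _ => ?_
        rw [qprob, mul_sum]
        exact sum_congr rfl fun z hz => by rw [(mem_filter.mp hz).2]
    _ = _ := sum_fiberwise_of_maps_to (fun z _ => mem_range.mpr (z i).isLt) _

lemma sum_mul_qprob_sub (P : (Fin N → Fin (C + 1)) → ℝ) (i : Fin N) (f : ℕ → ℝ) :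
    ∑ y ∈ range (C + 1), f y * qprob N C M P i (C - y)
      = ∑ z ∈ Feas N C M, f (C - z i) * P z := by
  calc ∑ y ∈ range (C + 1), f y * qprob N C M P i (C - y)
      = ∑ x ∈ range (C + 1), f (C - x) * qprob N C M P i x := by
        rw [← sum_range_reflect]
        refine sum_congr rfl fun x hx => ?_
        rw [mem_range] at hx
        rw [Nat.add_sub_cancel, Nat.sub_sub_self (by omega)]
    _ = _ := sum_mul_qprob P i _

lemma sum_sub_div_mul_qprob_sub (P : (Fin N → Fin (C + 1)) → ℝ) (i : Fin N) :
    ∑ y ∈ range (C + 1), ((C : ℝ) - y) / C * qprob N C M P i (C - y)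
      = cachedFraction N C M P i := by
  rw [sum_mul_qprob_sub (f := fun y => ((C : ℝ) - y) / C)]
  refine sum_congr rfl fun z _ => ?_
  rw [Nat.cast_sub (z i).is_le, sub_sub_cancel]

lemma sum_div_mul_qprob_sub (hC : C ≠ 0) {P : (Fin N → Fin (C + 1)) → ℝ}
    (hP : IsPmfOnFeas N C M P) (i : Fin N) :
    ∑ y ∈ range (C + 1), (y : ℝ) / C * qprob N C M P i (C - y)
      = 1 - cachedFraction N C M P i := by
  rw [sum_mul_qprob_sub (f := fun y => (y : ℝ) / C), cachedFraction, ← hP.2, ← sum_sub_distrib]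
  refine sum_congr rfl fun z _ => ?_
  rw [Nat.cast_sub (z i).is_le]
  field_simp

lemma cachedFraction_mem_Icc {P : (Fin N → Fin (C + 1)) → ℝ} (hP : IsPmfOnFeas N C M P)
    (i : Fin N) : cachedFraction N C M P i ∈ Set.Icc (0 : ℝ) 1 := by
  have hz : ∀ z : Fin N → Fin (C + 1), ((z i : ℕ) : ℝ) / C ∈ Set.Icc (0 : ℝ) 1 := fun z =>
    ⟨by positivity, div_le_one_of_le₀ (by exact_mod_cast (z i).is_le) (Nat.cast_nonneg C)⟩
  refine ⟨sum_nonneg fun z hz' => mul_nonneg (hz z).1 (hP.1 z hz'), ?_⟩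
  calc cachedFraction N C M P i ≤ ∑ z ∈ Feas N C M, 1 * P z :=
        sum_le_sum fun z hz' => mul_le_mul_of_nonneg_right (hz z).2 (hP.1 z hz')
    _ = 1 := by simp [hP.2]

lemma sum_cachedFraction (hC : C ≠ 0) {P : (Fin N → Fin (C + 1)) → ℝ}
    (hP : IsPmfOnFeas N C M P) : ∑ i, cachedFraction N C M P i = M := by
  calc ∑ i, cachedFraction N C M P i
      = ∑ z ∈ Feas N C M, ((∑ i, (z i : ℕ) : ℕ) : ℝ) / C * P z := by
        simp only [cachedFraction]
        rw [sum_comm]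
        simp [← sum_mul, ← sum_div]
    _ = ∑ z ∈ Feas N C M, (M : ℝ) * P z := by
        refine sum_congr rfl fun z hz => ?_
        rw [(mem_filter.mp hz).2]
        push_cast
        field_simp
    _ = M := by rw [← mul_sum, hP.2, mul_one]

lemma commCost_eq_sum_cachedFraction {K : ℕ} (hC : C ≠ 0) (p : Fin N → ℝ) (pg : Fin K → ℝ)
    {P : Fin K → (Fin N → Fin (C + 1)) → ℝ} (hP : ∀ k, IsPmfOnFeas N C M (P k)) :
    commCost N K C M p pg P = ∑ k, ∑ i, pg k * p i * (1 - cachedFraction N C M (P k) i) := by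
  simp only [commCost, mul_sum]
  refine sum_congr rfl fun k _ => sum_congr rfl fun i _ => ?_
  rw [← sum_div_mul_qprob_sub hC (hP k), mul_sum]
  refine sum_congr rfl fun y _ => ?_
  ring

lemma exists_pmf_qprob_eq_of_mem_convexHull (hC : C ≠ 0) {α : Fin N → ℝ}
    (hα : α ∈ convexHull ℝ (hypersimplexVertices (Fin N) M)) :
    ∃ P, IsPmfOnFeas N C M P ∧ ∀ i x,
      qprob N C M P i x = if x = C then α i else if x = 0 then 1 - α i else 0 := by
  classical
  obtain ⟨κ, _, w, v, hw0, hw1, hv, hwv⟩ := mem_convexHull_iff_exists_fintype.mp hα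
  let u : κ → Fin N → Fin (C + 1) := fun j i => if v j i = 1 then Fin.last C else 0
  have hu : ∀ j i, ((u j i : ℕ) : ℝ) = C * v j i := by
    intro j i
    rcases (hv j).1 i with h | h <;> simp [u, h]
  have huFeas : ∀ j, u j ∈ Feas N C M := by
    intro j
    have : ((∑ i, (u j i : ℕ) : ℕ) : ℝ) = (M * C : ℕ) := by
      push_cast
      simp_rw [hu]
      rw [← mul_sum, (hv j).2, mul_comm]
    simp only [Feas, mem_filter, mem_univ, true_and]
    exact_mod_cast this
  have hind : ∀ j i x, (if (u j i : ℕ) = x then (1 : ℝ) else 0)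
      = if x = C then v j i else if x = 0 then 1 - v j i else 0 := by
    intro j i x
    rcases (hv j).1 i with h | h <;> by_cases hxC : x = C <;> by_cases hx0 : x = 0 <;>
      simp [u, h, hxC, hx0, hC, eq_comm (b := x), eq_comm (b := C)]
  refine ⟨fun z => ∑ j with u j = z, w j, ⟨fun z _ => sum_nonneg fun j _ => hw0 j, ?_⟩,
    fun i x => ?_⟩
  · rw [sum_fiberwise_of_maps_to fun j _ => huFeas j]
    exact hw1
  have hαi : ∑ j, w j * v j i = α i := by
    rw [← hwv]
    simp [Finset.sum_apply]
  calc qprob N C M (fun z => ∑ j with u j = z, w j) i x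
      = ∑ j, w j * if (u j i : ℕ) = x then 1 else 0 := by
        rw [qprob, sum_fiberwise_eq_sum_filter, sum_filter]
        refine sum_congr rfl fun j _ => ?_
        simp [huFeas j]
    _ = if x = C then α i else if x = 0 then 1 - α i else 0 := by
        simp_rw [hind]
        by_cases hxC : x = C <;> by_cases hx0 : x = 0 <;>
          simp [hxC, hx0, hαi, mul_sub, sum_sub_distrib, hw1]

end Caching

section Equivalence

variable {N K C M : ℕ} {p : Fin N → ℝ} {pg : Fin K → ℝ} {ζ : ℝ}

lemma exists_P2Feasible_of_P1Feasible (hC : C ≠ 0) {P : Fin K → (Fin N → Fin (C + 1)) → ℝ}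
    {Γ : ℕ → ℝ} (h : P1Feasible N K C M p pg ζ P Γ) :
    ∃ α γ0 γ1, P2Feasible N K M p pg ζ α γ0 γ1 ∧
      commCost N K C M p pg P = ∑ k, ∑ i, pg k * p i * (1 - α k i) := by
  obtain ⟨hP, hΓ, hζ⟩ := h
  have bound : ∀ k i (w : ℕ → ℝ), (∀ y ∈ range (C + 1), 0 ≤ w y) →
      pg k * p i * ∑ y ∈ range (C + 1), w y * qprob N C M (P k) i (C - y)
        ≤ ∑ y ∈ range (C + 1), w y * Γ y := by
    intro k i w hw
    rw [mul_sum]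
    refine sum_le_sum fun y hy => ?_
    calc pg k * p i * (w y * qprob N C M (P k) i (C - y))
        = w y * (p i * pg k * qprob N C M (P k) i (C - y)) := by ring
      _ ≤ w y * Γ y := mul_le_mul_of_nonneg_left (hΓ k i y hy) (hw y hy)
  refine ⟨fun k i => cachedFraction N C M (P k) i,
    ∑ y ∈ range (C + 1), ((C : ℝ) - y) / C * Γ y, ∑ y ∈ range (C + 1), (y : ℝ) / C * Γ y,
    ⟨fun k i => cachedFraction_mem_Icc (hP k) i, fun k => sum_cachedFraction hC (hP k),
      fun k i => ?_, fun k i => ?_, ?_⟩, commCost_eq_sum_cachedFraction hC p pg hP⟩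
  · dsimp only
    rw [← sum_sub_div_mul_qprob_sub]
    refine bound k i _ fun y hy => div_nonneg (sub_nonneg.mpr ?_) (Nat.cast_nonneg C)
    exact_mod_cast Nat.lt_succ_iff.mp (mem_range.mp hy)
  · dsimp only
    rw [← sum_div_mul_qprob_sub hC (hP k)]
    exact bound k i _ fun y _ => by positivity
  · have hsplit : ∑ y ∈ range (C + 1), ((C : ℝ) - y) / C * Γ y
        + ∑ y ∈ range (C + 1), (y : ℝ) / C * Γ y = ∑ y ∈ range (C + 1), Γ y := by
      rw [← sum_add_distrib]
      refine sum_congr rfl fun y _ => ?_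
      field_simp
      ring
    linarith

lemma exists_P1Feasible_of_P2Feasible (hC : C ≠ 0) {α : Fin K → Fin N → ℝ} {γ0 γ1 : ℝ}
    (h : P2Feasible N K M p pg ζ α γ0 γ1) :
    ∃ P Γ, P1Feasible N K C M p pg ζ P Γ ∧
      commCost N K C M p pg P = ∑ k, ∑ i, pg k * p i * (1 - α k i) := by
  obtain ⟨h01, hsum, hγ0, hγ1, hζ⟩ := h
  choose P hP hq using fun k =>
    exists_pmf_qprob_eq_of_mem_convexHull hC (mem_convexHull_hypersimplexVertices (h01 k) (hsum k))
  have hfrac : ∀ k i, cachedFraction N C M (P k) i = α k i := by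
    intro k i
    rw [cachedFraction, ← sum_mul_qprob (f := fun x => (x : ℝ) / C),
      sum_eq_single_of_mem C (mem_range.mpr C.lt_succ_self)]
    · simp [hq, hC]
    · intro x _ hxC
      simp +contextual [hq, hxC]
  refine ⟨P, fun y => (if y = 0 then γ0 else 0) + (if y = C then γ1 else 0),
    ⟨hP, fun k i y hy => ?_, ?_⟩, ?_⟩
  · have hyC : y ≤ C := Nat.lt_succ_iff.mp (mem_range.mp hy)
    rcases eq_or_ne y 0 with rfl | hy0
    · simpa [hq, hC.symm, mul_comm (p i)] using hγ0 k i
    rcases eq_or_ne y C with rfl | hyC'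
    · simpa [hq, hy0, hy0.symm, mul_comm (p i)] using hγ1 k i
    simp [hq, hy0, hyC', show C - y ≠ C by omega, show C - y ≠ 0 by omega]
  · have hΓ : ∑ y ∈ range (C + 1), ((if y = 0 then γ0 else 0) + (if y = C then γ1 else 0))
        = γ0 + γ1 := by
      simp [sum_add_distrib]
    rw [hΓ]
    linarith
  · simp only [commCost_eq_sum_cachedFraction hC p pg hP, hfrac]

end Equivalence

theorem stmt4_general (N K C M : ℕ) (hC : 1 ≤ C)
    (p : Fin N → ℝ) (pg : Fin K → ℝ) (ζ : ℝ) :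
    {c : ℝ | ∃ (P : Fin K → (Fin N → Fin (C + 1)) → ℝ) (Γ : ℕ → ℝ),
        P1Feasible N K C M p pg ζ P Γ ∧ c = commCost N K C M p pg P}
    = {c : ℝ | ∃ (α : Fin K → Fin N → ℝ) (γ0 γ1 : ℝ),
        P2Feasible N K M p pg ζ α γ0 γ1 ∧
        c = ∑ k : Fin K, ∑ i : Fin N, pg k * p i * (1 - α k i)} := by
  have hC0 : C ≠ 0 := Nat.one_le_iff_ne_zero.mp hC
  ext c
  constructor
  · rintro ⟨P, Γ, hP, rfl⟩
    exact exists_P2Feasible_of_P1Feasible hC0 hP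
  · rintro ⟨α, γ0, γ1, hα, rfl⟩
    obtain ⟨P, Γ, hP, hcost⟩ := exists_P1Feasible_of_P2Feasible hC0 hα
    exact ⟨P, Γ, hP, hcost.symm⟩

/-- Lemma 1: for every privacy threshold `ζ`, the set of communication costs
attained by P1-feasible points (chunk-based JPC) equals the set of objectives
attained by P2-feasible points (DPC); in particular the two optimizations
have the same optimal value. -/
theorem stmt4 (N K C M : ℕ) (hN : 1 ≤ N) (hK : 1 ≤ K) (hC : 1 ≤ C)
    (hM : 1 ≤ M) (hMN : M ≤ N)
    (p : Fin N → ℝ) (hp0 : ∀ i, 0 ≤ p i) (hp1 : ∑ i, p i = 1)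
    (pg : Fin K → ℝ) (hpg0 : ∀ k, 0 ≤ pg k) (hpg1 : ∑ k, pg k = 1)
    (ζ : ℝ) :
    {c : ℝ | ∃ (P : Fin K → (Fin N → Fin (C + 1)) → ℝ) (Γ : ℕ → ℝ),
        P1Feasible N K C M p pg ζ P Γ ∧ c = commCost N K C M p pg P}
    = {c : ℝ | ∃ (α : Fin K → Fin N → ℝ) (γ0 γ1 : ℝ),
        P2Feasible N K M p pg ζ α γ0 γ1 ∧
        c = ∑ k : Fin K, ∑ i : Fin N, pg k * p i * (1 - α k i)} :=
  stmt4_general N K C M hC p pg ζ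
end

section
/- Let N ≥ 2 and 1 ≤ M < N, let file popularities p : Fin N → ℝ satisfy p_i ≥ 0, ∑_i p_i = 1 and p_1 ≥ p_2 ≥ … ≥ p_N, let request generation probabilities pg : Fin K → ℝ satisfy pg_k ≥ 0 and ∑_k pg_k = 1, and let s ∈ [0,1]. In the random dummy approach (RDA) each cache deterministically stores files 1,…,M; a request for a cached file i ≤ M is answered with C chunks with probability s and with 0 chunks with probability 1−s, while a request for an uncached file i > M is answered with C chunks with probability 1. Formally the observation Y takes values in {0, C} with q(k,i)(C) = s and q(k,i)(0) = 1−s for i ≤ M, and q(k,i)(C) = 1, q(k,i)(0) = 0 for i > M. Then the privacy degree satisfies Ψ = 1 − ∑_{y ∈ {0,C}} max_{k,i} pg_k · p_i · q(k,i)(y) = 1 − (max_k pg_k) · ( (1−s)·p_1 + max{ p_{M+1}, s·p_1 } ). -/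
/-!
The observation law of a request does not depend on the requesting cache, so every joint weight
factors as `pg k * (q_i(y) * p i)` and the adversary's maximum splits into `max_k pg_k` times a
maximum over files. Since `p` is nonincreasing, the latter is attained at file `1` among the
cached files and at file `M + 1` among the uncached ones.
-/

open Finset

theorem Finset.sup'_product_mul {α β R : Type*} [Field R] [LinearOrder R] [IsStrictOrderedRing R]
    {s : Finset α} {t : Finset β} (hs : s.Nonempty) (ht : t.Nonempty) (f : α → R) (g : β → R)
    (hf : ∀ a ∈ s, 0 ≤ f a) (hg : ∀ b ∈ t, 0 ≤ g b) :
    (s ×ˢ t).sup' (hs.product ht) (fun x => f x.1 * g x.2) = s.sup' hs f * t.sup' ht g := by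
  obtain ⟨b, hb⟩ := ht
  have hgt : 0 ≤ t.sup' ⟨b, hb⟩ g := (hg b hb).trans (le_sup' g hb)
  rw [sup'_product_left, sup'_mul₀ hgt]
  exact sup'_congr hs rfl fun a ha => (mul₀_sup' (hf a ha) g t _).symm

theorem Fintype.sup'_univ_prod_mul {α β R : Type*} [Fintype α] [Fintype β]
    [Field R] [LinearOrder R] [IsStrictOrderedRing R]
    (h : (univ : Finset (α × β)).Nonempty) (hα : (univ : Finset α).Nonempty)
    (hβ : (univ : Finset β).Nonempty) (f : α → R) (g : β → R) (hf : 0 ≤ f) (hg : 0 ≤ g) :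
    univ.sup' h (fun x => f x.1 * g x.2) = univ.sup' hα f * univ.sup' hβ g := by
  rw [← sup'_product_mul hα hβ f g (fun a _ => hf a) (fun b _ => hg b)]
  exact sup'_congr h univ_product_univ.symm fun _ _ => rfl

theorem Fin.sup'_ite_mul_of_antitone {R : Type*} [Semiring R] [LinearOrder R] [IsOrderedRing R]
    {N M : ℕ} (hM : 0 < M) (hMN : M < N) (h : (univ : Finset (Fin N)).Nonempty)
    {p : Fin N → R} (hp : Antitone p) {a b : R} (ha : 0 ≤ a) (hb : 0 ≤ b) :
    univ.sup' h (fun i : Fin N => (if (i : ℕ) < M then a else b) * p i)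
      = max (a * p ⟨0, hM.trans hMN⟩) (b * p ⟨M, hMN⟩) := by
  apply le_antisymm
  · refine sup'_le _ _ fun i _ => ?_
    split_ifs with hi
    · exact le_max_of_le_left (mul_le_mul_of_nonneg_left (hp (Nat.zero_le _)) ha)
    · exact le_max_of_le_right (mul_le_mul_of_nonneg_left (hp (not_lt.mp hi)) hb)
  · refine max_le ?_ ?_
    · exact le_sup'_of_le _ (mem_univ ⟨0, hM.trans hMN⟩) (by simp [hM])
    · exact le_sup'_of_le _ (mem_univ ⟨M, hMN⟩) (by simp)

theorem stmt9 (N K M : ℕ)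
    (hM1 : 1 ≤ M) (hMN : M < N)
    (p : Fin N → ℝ) (hp0 : ∀ i, 0 ≤ p i)
    (hpmono : ∀ i j : Fin N, i ≤ j → p j ≤ p i)
    (pg : Fin K → ℝ) (hpg0 : ∀ k, 0 ≤ pg k)
    (s : ℝ) (hs0 : 0 ≤ s) (hs1 : s ≤ 1)
    (q : Fin K × Fin N → Fin 2 → ℝ)
    (hqcached : ∀ (k : Fin K) (i : Fin N), (i : ℕ) < M →
      q (k, i) 0 = 1 - s ∧ q (k, i) 1 = s)
    (hquncached : ∀ (k : Fin K) (i : Fin N), M ≤ (i : ℕ) →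
      q (k, i) 0 = 0 ∧ q (k, i) 1 = 1)
    (hne : (Finset.univ : Finset (Fin K × Fin N)).Nonempty)
    (hneK : (Finset.univ : Finset (Fin K)).Nonempty) :
    1 - ∑ y : Fin 2, Finset.univ.sup' hne
        (fun ki : Fin K × Fin N => pg ki.1 * p ki.2 * q ki y)
      = 1 - (Finset.univ.sup' hneK pg)
          * ((1 - s) * p ⟨0, by omega⟩
            + max (p ⟨M, hMN⟩) (s * p ⟨0, by omega⟩)) := by
  have hneN : (univ : Finset (Fin N)).Nonempty := ⟨⟨M, hMN⟩, mem_univ _⟩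
  have hlaw_nonneg : ∀ y, 0 ≤ ![1 - s, s] y ∧ 0 ≤ (![0, 1] : Fin 2 → ℝ) y := by
    intro y; fin_cases y <;> simp [hs0, hs1]
  have hfactor : ∀ y : Fin 2, (fun ki : Fin K × Fin N => pg ki.1 * p ki.2 * q ki y)
      = fun ki => pg ki.1 * ((if (ki.2 : ℕ) < M then ![1 - s, s] y else ![0, 1] y) * p ki.2) := by
    intro y
    funext ⟨k, i⟩
    by_cases hi : (i : ℕ) < M
    · fin_cases y <;> simp [hi, hqcached k i hi] <;> ring
    · fin_cases y <;> simp [hi, hquncached k i (not_lt.mp hi)]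
  have hsup : ∀ y : Fin 2, univ.sup' hne (fun ki : Fin K × Fin N => pg ki.1 * p ki.2 * q ki y)
      = univ.sup' hneK pg * max (![1 - s, s] y * p ⟨0, by omega⟩) (![0, 1] y * p ⟨M, hMN⟩) := by
    intro y
    rw [hfactor y, Fintype.sup'_univ_prod_mul hne hneK hneN pg
      (fun i : Fin N => (if (i : ℕ) < M then ![1 - s, s] y else ![0, 1] y) * p i) hpg0
      (fun i => mul_nonneg (by split_ifs <;> simp [hlaw_nonneg y]) (hp0 i)),
      Fin.sup'_ite_mul_of_antitone hM1 hMN hneN hpmono (hlaw_nonneg y).1 (hlaw_nonneg y).2]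
  rw [Fin.sum_univ_two, hsup, hsup]
  simp [max_eq_left (mul_nonneg (sub_nonneg.mpr hs1) (hp0 _)), max_comm, mul_add]
end

section
/- Suppose every placement in the support of every policy is non-chunk-based, i.e., P^{(k)} z = 0 whenever some z i ∉ {0, C}. Define the hit ratio of cache k as h^{(k)} = ∑_i p_i · ∑_{z ∈ F, z i ≠ 0} P^{(k)} z. Then the average hit ratio and the communication cost satisfy ∑_k pg_k · h^{(k)} = 1 − Ω. In particular, the average-hit-ratio constraint ∑_k pg_k · h^{(k)} ≥ β is equivalent to the communication-cost constraint Ω ≤ 1 − β. -/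
/-!
Under a non-chunk-based policy every file is cached with either `0` or `C` chunks, so
`q_{i,x} = 0` for `x ∉ {0, C}`. In the cost only the term `y = C` survives, and its weight `C`
cancels the normalisation `1 / C`: `Ω = ∑_k pg_k ∑_i p_i q^{(k)}_{i,0}`. Since `P^{(k)}` is a
pmf, `q^{(k)}_{i,0} = 1 − P^{(k)}(z_i ≠ 0)` is the miss probability of file `i`, whence
`∑_k pg_k h^{(k)} = 1 − Ω`.
-/

open Finset

lemma sum_range_mul_sub_eq_of_support {C : ℕ} {f : ℕ → ℝ}
    (hf : ∀ x, x ≠ 0 → x ≠ C → f x = 0) :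
    ∑ y ∈ range (C + 1), (y : ℝ) * f (C - y) = C * f 0 := by
  rw [sum_eq_single C _ (fun h => absurd (self_mem_range_succ C) h), Nat.sub_self]
  intro y hy hyC
  rcases Nat.eq_zero_or_pos y with rfl | hy0
  · simp
  · have hyle : y ≤ C := Nat.lt_succ_iff.mp (mem_range.mp hy)
    rw [hf (C - y) (by omega) (by omega), mul_zero]

def IsNonChunkBased {N C : ℕ} (P : (Fin N → Fin (C + 1)) → ℝ) : Prop :=
  ∀ z, (¬ ∀ i, (z i : ℕ) = 0 ∨ (z i : ℕ) = C) → P z = 0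

section Placement

variable {N C M : ℕ} {P : (Fin N → Fin (C + 1)) → ℝ}

lemma qprob_eq_zero_of_isNonChunkBased (hP : IsNonChunkBased P)
    (i : Fin N) (x : ℕ) (hx0 : x ≠ 0) (hxC : x ≠ C) : qprob N C M P i x = 0 :=
  sum_eq_zero fun z hz => hP z fun hall => by
    have hzi := (mem_filter.mp hz).2
    rcases hall i with h | h <;> omega

lemma qprob_zero_eq_one_sub (hP : ∑ z ∈ Feas N C M, P z = 1) (i : Fin N) :
    qprob N C M P i 0 = 1 - ∑ z ∈ (Feas N C M).filter (fun z => (z i : ℕ) ≠ 0), P z := by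
  rw [← hP, ← sum_filter_add_sum_filter_not (Feas N C M) (fun z => (z i : ℕ) = 0)]
  simp [qprob]

end Placement

lemma commCost_eq_of_isNonChunkBased {N K C M : ℕ} (hC : C ≠ 0)
    (p : Fin N → ℝ) (pg : Fin K → ℝ) {P : Fin K → (Fin N → Fin (C + 1)) → ℝ}
    (hP : ∀ k, IsNonChunkBased (P k)) :
    commCost N K C M p pg P = ∑ k, pg k * ∑ i, p i * qprob N C M (P k) i 0 := by
  have inner : ∀ k i, ∑ y ∈ range (C + 1), pg k * p i * y * qprob N C M (P k) i (C - y) =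
      pg k * p i * (C * qprob N C M (P k) i 0) := fun k i => by
    simp_rw [mul_assoc (pg k * p i), ← mul_sum]
    rw [sum_range_mul_sub_eq_of_support (qprob_eq_zero_of_isNonChunkBased (hP k) i)]
  have hC' : (C : ℝ) ≠ 0 := Nat.cast_ne_zero.mpr hC
  simp_rw [commCost, inner, mul_sum]
  refine sum_congr rfl fun k _ => sum_congr rfl fun i _ => ?_
  field_simp

theorem stmt12_general (N K C M : ℕ) (hC : 1 ≤ C)
    (p : Fin N → ℝ) (hp1 : ∑ i, p i = 1)
    (pg : Fin K → ℝ) (hpg1 : ∑ k, pg k = 1)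
    (P : Fin K → (Fin N → Fin (C + 1)) → ℝ)
    (hpmf : ∀ k, IsPmfOnFeas N C M (P k))
    (hsupp : ∀ (k : Fin K) (z : Fin N → Fin (C + 1)),
      (¬ ∀ i, (z i : ℕ) = 0 ∨ (z i : ℕ) = C) → P k z = 0)
    (h : Fin K → ℝ)
    (hh : ∀ k, h k = ∑ i : Fin N, p i *
      ∑ z ∈ (Feas N C M).filter (fun z => (z i : ℕ) ≠ 0), P k z) :
    (∑ k, pg k * h k = 1 - commCost N K C M p pg P) ∧
    (∀ β : ℝ, (∑ k, pg k * h k ≥ β ↔ commCost N K C M p pg P ≤ 1 - β)) := by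
  have hit_ratio : ∀ k, h k = 1 - ∑ i, p i * qprob N C M (P k) i 0 := fun k => by
    simp_rw [hh k, qprob_zero_eq_one_sub (hpmf k).2, mul_sub, sum_sub_distrib, mul_one, hp1]
    ring
  have hit : ∑ k, pg k * h k = 1 - commCost N K C M p pg P := by
    simp_rw [commCost_eq_of_isNonChunkBased (by omega) p pg hsupp, hit_ratio, mul_sub,
      sum_sub_distrib, mul_one, hpg1]
  exact ⟨hit, fun β => by rw [hit]; constructor <;> intro <;> linarith⟩

/-- For non-chunk-based policies (every placement in the support caches each
file either entirely or not at all), the average hit ratio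
`∑_k pg_k · h^{(k)}` with `h^{(k)} = ∑_i p_i · ∑_{z ∈ F, z i ≠ 0} P^{(k)} z`
equals `1 − Ω`; in particular the average-hit-ratio constraint
`∑_k pg_k · h^{(k)} ≥ β` is equivalent to `Ω ≤ 1 − β`. -/
theorem stmt12 (N K C M : ℕ) (hN : 1 ≤ N) (hK : 1 ≤ K) (hC : 1 ≤ C)
    (hM : 1 ≤ M) (hMN : M ≤ N)
    (p : Fin N → ℝ) (hp0 : ∀ i, 0 ≤ p i) (hp1 : ∑ i, p i = 1)
    (pg : Fin K → ℝ) (hpg0 : ∀ k, 0 ≤ pg k) (hpg1 : ∑ k, pg k = 1)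
    (P : Fin K → (Fin N → Fin (C + 1)) → ℝ)
    (hpmf : ∀ k, IsPmfOnFeas N C M (P k))
    (hsupp : ∀ (k : Fin K) (z : Fin N → Fin (C + 1)),
      (¬ ∀ i, (z i : ℕ) = 0 ∨ (z i : ℕ) = C) → P k z = 0)
    (h : Fin K → ℝ)
    (hh : ∀ k, h k = ∑ i : Fin N, p i *
      ∑ z ∈ (Feas N C M).filter (fun z => (z i : ℕ) ≠ 0), P k z) :
    (∑ k, pg k * h k = 1 - commCost N K C M p pg P) ∧
    (∀ β : ℝ, (∑ k, pg k * h k ≥ β ↔ commCost N K C M p pg P ≤ 1 - β)) :=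
  stmt12_general N K C M hC p hp1 pg hpg1 P hpmf hsupp h hh
end

section
/- Fix integers K ≥ 1, L ≥ 1, C ≥ 1, reals pg : Fin K → ℝ with pg_k ≥ 0, reals p*_l ≥ 0 for l ∈ Fin L, a threshold ζ ∈ ℝ, reals Γ_0, …, Γ_C, and for each k ∈ Fin K, l ∈ Fin L a pmf r^{(k)}_l on {0,…,C} (r^{(k)}_l(y) ≥ 0, ∑_{y=0}^{C} r^{(k)}_l(y) = 1). Assume Γ_y ≥ p*_l · pg_k · r^{(k)}_l(y) for all k, l, y, and 1 − ∑_{y=0}^{C} Γ_y ≥ ζ. Define e^{(k)}_l = (1/C) ∑_{y=0}^{C} y · r^{(k)}_l(y), γ̌_0 = (1/C) ∑_{y=0}^{C} (C − y) · Γ_y, and γ̌_1 = (1/C) ∑_{y=0}^{C} y · Γ_y. Then 1 − γ̌_0 − γ̌_1 ≥ ζ, and for all k, l: γ̌_1 ≥ p*_l · pg_k · e^{(k)}_l and γ̌_0 ≥ p*_l · pg_k · (1 − e^{(k)}_l). -/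
/-! The single-chunk bounds are nonnegative combinations of the `C`-chunk bounds
`Γ_y ≥ p*_l pg_k r(y)`, with weights `y / C` for `γ̌_1` and `(C - y) / C` for `γ̌_0`.
Since these two weights add up to `1` for every `y`, `γ̌_0 + γ̌_1 = ∑_y Γ_y`, so the
privacy constraint carries over unchanged. -/

open Finset

theorem sum_sub_mul_add_sum_mul {ι : Type*} (s : Finset ι) (c : ℝ) (w f : ι → ℝ) :
    ∑ i ∈ s, (c - w i) * f i + ∑ i ∈ s, w i * f i = c * ∑ i ∈ s, f i := by
  rw [← sum_add_distrib, mul_sum]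
  exact sum_congr rfl fun i _ => by ring

theorem one_sub_one_div_mul_sum_mul {ι : Type*} {s : Finset ι} {c : ℝ} (hc : c ≠ 0)
    (w : ι → ℝ) {f : ι → ℝ} (hf : ∑ i ∈ s, f i = 1) :
    1 - 1 / c * ∑ i ∈ s, w i * f i = 1 / c * ∑ i ∈ s, (c - w i) * f i := by
  have hsplit := sum_sub_mul_add_sum_mul s c w f
  rw [hf, mul_one] at hsplit
  field_simp
  linarith

theorem mul_mul_sum_mul_le {ι : Type*} {s : Finset ι} {a c : ℝ} {w f g : ι → ℝ}
    (hc : 0 ≤ c) (hw : ∀ i ∈ s, 0 ≤ w i) (h : ∀ i ∈ s, a * f i ≤ g i) :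
    a * (c * ∑ i ∈ s, w i * f i) ≤ c * ∑ i ∈ s, w i * g i := by
  rw [mul_left_comm, mul_sum]
  refine mul_le_mul_of_nonneg_left (sum_le_sum fun i hi => ?_) hc
  rw [mul_left_comm]
  exact mul_le_mul_of_nonneg_left (h i hi) (hw i hi)

theorem stmt13_general (K L C : ℕ) (hC : 1 ≤ C)
    (pg : Fin K → ℝ)
    (pstar : Fin L → ℝ)
    (ζ : ℝ) (Γ : ℕ → ℝ)
    (r : Fin K → Fin L → ℕ → ℝ)
    (hr1 : ∀ (k : Fin K) (l : Fin L), ∑ y ∈ Finset.range (C + 1), r k l y = 1)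
    (hΓ : ∀ (k : Fin K) (l : Fin L), ∀ y ∈ Finset.range (C + 1),
      Γ y ≥ pstar l * pg k * r k l y)
    (hζ : 1 - ∑ y ∈ Finset.range (C + 1), Γ y ≥ ζ)
    (e : Fin K → Fin L → ℝ)
    (he : ∀ k l, e k l = (1 / (C : ℝ)) * ∑ y ∈ Finset.range (C + 1),
      (y : ℝ) * r k l y)
    (γ0 γ1 : ℝ)
    (hγ0 : γ0 = (1 / (C : ℝ)) * ∑ y ∈ Finset.range (C + 1),
      ((C : ℝ) - (y : ℝ)) * Γ y)
    (hγ1 : γ1 = (1 / (C : ℝ)) * ∑ y ∈ Finset.range (C + 1), (y : ℝ) * Γ y) :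
    (1 - γ0 - γ1 ≥ ζ) ∧
    (∀ (k : Fin K) (l : Fin L), γ1 ≥ pstar l * pg k * e k l) ∧
    (∀ (k : Fin K) (l : Fin L), γ0 ≥ pstar l * pg k * (1 - e k l)) := by
  have hC0 : (C : ℝ) ≠ 0 := by positivity
  have hy_le : ∀ y ∈ range (C + 1), (y : ℝ) ≤ C := fun y hy => by
    exact_mod_cast Nat.lt_succ_iff.mp (mem_range.mp hy)
  have hγ_sum : γ0 + γ1 = ∑ y ∈ range (C + 1), Γ y := by
    rw [hγ0, hγ1, ← mul_add, sum_sub_mul_add_sum_mul, one_div, inv_mul_cancel_left₀ hC0]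
  refine ⟨by linarith, fun k l => ?_, fun k l => ?_⟩
  · rw [he, hγ1]
    exact mul_mul_sum_mul_le (by positivity) (fun y _ => y.cast_nonneg) (hΓ k l)
  · rw [he, one_sub_one_div_mul_sum_mul hC0 _ (hr1 k l), hγ0]
    exact mul_mul_sum_mul_le (by positivity) (fun y hy => sub_nonneg.2 (hy_le y hy)) (hΓ k l)

/-- Feasibility transfer from the `C`-chunk SPC optimization to the
single-chunk one: if `Γ_y ≥ p*_l · pg_k · r^{(k)}_l(y)` for all `k, l, y` and
`1 − ∑_{y=0}^{C} Γ_y ≥ ζ`, then with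
`e^{(k)}_l = (1/C) ∑_y y·r^{(k)}_l(y)`,
`γ̌_0 = (1/C) ∑_y (C−y)·Γ_y` and `γ̌_1 = (1/C) ∑_y y·Γ_y`, one has
`1 − γ̌_0 − γ̌_1 ≥ ζ`, `γ̌_1 ≥ p*_l·pg_k·e^{(k)}_l` and
`γ̌_0 ≥ p*_l·pg_k·(1 − e^{(k)}_l)`. -/
theorem stmt13 (K L C : ℕ) (hK : 1 ≤ K) (hL : 1 ≤ L) (hC : 1 ≤ C)
    (pg : Fin K → ℝ) (hpg0 : ∀ k, 0 ≤ pg k)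
    (pstar : Fin L → ℝ) (hpstar0 : ∀ l, 0 ≤ pstar l)
    (ζ : ℝ) (Γ : ℕ → ℝ)
    (r : Fin K → Fin L → ℕ → ℝ)
    (hr0 : ∀ (k : Fin K) (l : Fin L) (y : ℕ), y ≤ C → 0 ≤ r k l y)
    (hr1 : ∀ (k : Fin K) (l : Fin L), ∑ y ∈ Finset.range (C + 1), r k l y = 1)
    (hΓ : ∀ (k : Fin K) (l : Fin L), ∀ y ∈ Finset.range (C + 1),
      Γ y ≥ pstar l * pg k * r k l y)
    (hζ : 1 - ∑ y ∈ Finset.range (C + 1), Γ y ≥ ζ)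
    (e : Fin K → Fin L → ℝ)
    (he : ∀ k l, e k l = (1 / (C : ℝ)) * ∑ y ∈ Finset.range (C + 1),
      (y : ℝ) * r k l y)
    (γ0 γ1 : ℝ)
    (hγ0 : γ0 = (1 / (C : ℝ)) * ∑ y ∈ Finset.range (C + 1),
      ((C : ℝ) - (y : ℝ)) * Γ y)
    (hγ1 : γ1 = (1 / (C : ℝ)) * ∑ y ∈ Finset.range (C + 1), (y : ℝ) * Γ y) :
    (1 - γ0 - γ1 ≥ ζ) ∧
    (∀ (k : Fin K) (l : Fin L), γ1 ≥ pstar l * pg k * e k l) ∧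
    (∀ (k : Fin K) (l : Fin L), γ0 ≥ pstar l * pg k * (1 - e k l)) :=
  stmt13_general K L C hC pg pstar ζ Γ r hr1 hΓ hζ e he γ0 γ1 hγ0 hγ1
end

section
/- Let L ≥ 3, C ≥ 1 and 2 ≤ m ≤ L − 1, let pg : Fin K → ℝ with pg_k ≥ 0, let p*_1 ≥ p*_2 ≥ … ≥ p*_L ≥ 0, let n_m ≥ 1 and 0 < z_m ≤ n_m·C. Consider the deterministic SPC placement that caches all chunks of subsets S_1, …, S_{m−1}, exactly z_m chunks chosen uniformly at random from the n_m·C chunks of subset S_m, and no chunks from subsets S_{m+1}, …, S_L; its conditional observation laws are r_l(0) = 1 (and r_l(y) = 0 otherwise) for l ≤ m−1; r_l(C) = 1 (and r_l(y) = 0 otherwise) for l ≥ m+1; and r_m(y) = (C choose (C−y))·((n_m C − C) choose (z_m − (C−y))) / ((n_m C) choose z_m) for 0 ≤ y ≤ C. Then the privacy degree Ψ = 1 − ∑_{y=0}^{C} max_{l,k} pg_k · p*_l · r_l(y) equals 1 − p*_1·pg^max − max{ (((n_m C − C) choose z_m)/((n_m C) choose z_m))·p*_m·pg^max , p*_{m+1}·pg^max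 } − p*_m·pg^max·( 1 − (((n_m C − C) choose (z_m − C)) + ((n_m C − C) choose z_m)) / ((n_m C) choose z_m) ), where pg^max = max_k pg_k. -/
/-!
Every layer value `p*_l · r_l(y)` is nonnegative, so the maximum over `(l, k)` factors as
`pg^max` times the maximum over the layers `l`. The fully cached subsets only produce `y = 0`
and the uncached ones only `y = C`; by monotonicity of `p*` the maximum is `p*_1` at `y = 0`,
`max (p*_m r_m(C)) p*_{m+1}` at `y = C`, and `p*_m r_m(y)` in between. Vandermonde's identity
gives `∑_y r_m(y) = 1`, which turns the middle terms into `p*_m (1 - r_m(0) - r_m(C))`.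
-/

/-- Binomial coefficient with an integer lower index, following the convention
that the coefficient vanishes for a negative lower index (and `Nat.choose`
already vanishes when the lower index exceeds the upper one). -/
def chooseZ (a : ℕ) (b : ℤ) : ℕ := if 0 ≤ b then a.choose b.toNat else 0

open Finset

lemma sup'_product_mul_of_nonneg {G₀ α β : Type*} [GroupWithZero G₀] [SemilatticeSup G₀]
    [PosMulReflectLT G₀] [MulPosReflectLT G₀] {s : Finset α} {t : Finset β}
    (h : (s ×ˢ t).Nonempty) (f : α → G₀) (g : β → G₀) (hf : ∀ a ∈ s, 0 ≤ f a)
    (hg : 0 ≤ t.sup' h.snd g) :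
    (s ×ˢ t).sup' h (fun x => g x.2 * f x.1) = t.sup' h.snd g * s.sup' h.fst f := by
  rw [sup'_product_left, mul₀_sup' hg]
  exact sup'_congr h.fst rfl fun a ha => (sup'_mul₀ (hf a ha) g t h.snd).symm

lemma sum_eq_sum_add_of_eq_off_pair {ι M : Type*} [AddCommGroup M] [DecidableEq ι]
    {s : Finset ι} {f g : ι → M} {a b : ι} (ha : a ∈ s) (hb : b ∈ s) (hab : a ≠ b)
    (h : ∀ i ∈ s, i ≠ a → i ≠ b → f i = g i) :
    ∑ i ∈ s, f i = ∑ i ∈ s, g i + (f a - g a) + (f b - g b) := by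
  have hdiff : ∑ i ∈ s, (f i - g i) = (f a - g a) + (f b - g b) := by
    rw [← sum_pair (f := fun i => f i - g i) hab]
    refine (sum_subset (insert_subset ha (singleton_subset_iff.mpr hb)) fun i hi hi' => ?_).symm
    simp only [mem_insert, mem_singleton, not_or] at hi'
    rw [h i hi hi'.1 hi'.2, sub_self]
  rw [add_assoc, ← hdiff, sum_sub_distrib]
  abel

lemma chooseZ_natCast (a b : ℕ) : chooseZ a b = a.choose b := by
  simp [chooseZ]

lemma chooseZ_of_neg (a : ℕ) {b : ℤ} (hb : b < 0) : chooseZ a b = 0 := by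
  simp [chooseZ, hb.not_ge]

theorem sum_range_choose_mul_chooseZ (c a z : ℕ) :
    ∑ j ∈ range (c + 1), c.choose j * chooseZ a ((z : ℤ) - j) = (c + a).choose z := by
  have hc : ∑ j ∈ range (c + 1), c.choose j * chooseZ a ((z : ℤ) - j)
      = ∑ j ∈ range (c + z + 1), c.choose j * chooseZ a ((z : ℤ) - j) := by
    refine sum_subset (range_subset_range.mpr (by omega)) fun j _ hj => ?_
    rw [Nat.choose_eq_zero_of_lt (by simpa using hj), zero_mul]
  have hz : ∑ j ∈ range (z + 1), c.choose j * chooseZ a ((z : ℤ) - j)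
      = ∑ j ∈ range (c + z + 1), c.choose j * chooseZ a ((z : ℤ) - j) := by
    refine sum_subset (range_subset_range.mpr (by omega)) fun j _ hj => ?_
    rw [chooseZ_of_neg a (by rw [mem_range] at hj; omega), mul_zero]
  rw [hc, ← hz, Nat.add_choose_eq, Nat.sum_antidiagonal_eq_sum_range_succ_mk]
  refine sum_congr rfl fun j hj => ?_
  rw [← Nat.cast_sub (by simpa [Nat.lt_succ_iff] using hj), chooseZ_natCast]

/-- The paper's `r_m(y)`: the probability that exactly `C - y` chunks of a fixed file are among
`z` chunks drawn without replacement from the `n * C` chunks of its subset. -/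
noncomputable def hypergeomLaw (C n z y : ℕ) : ℝ :=
  ((C.choose (C - y) * chooseZ (n * C - C) ((z : ℤ) - ((C : ℤ) - (y : ℤ))) : ℕ) : ℝ)
    / (((n * C).choose z : ℕ) : ℝ)

namespace hypergeomLaw

variable {C n z : ℕ}

lemma nonneg (y : ℕ) : 0 ≤ hypergeomLaw C n z y := by
  unfold hypergeomLaw
  positivity

lemma apply_zero : hypergeomLaw C n z 0
    = (chooseZ (n * C - C) ((z : ℤ) - C) : ℝ) / (((n * C).choose z : ℕ) : ℝ) := by
  simp [hypergeomLaw]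

lemma apply_self : hypergeomLaw C n z C
    = ((n * C - C).choose z : ℝ) / (((n * C).choose z : ℕ) : ℝ) := by
  simp [hypergeomLaw, chooseZ_natCast]

theorem sum_range (hn : 1 ≤ n) (hz : z ≤ n * C) :
    ∑ y ∈ range (C + 1), hypergeomLaw C n z y = 1 := by
  set f : ℕ → ℕ := fun j => C.choose j * chooseZ (n * C - C) ((z : ℤ) - j)
  have hnum : ∑ y ∈ range (C + 1),
      C.choose (C - y) * chooseZ (n * C - C) ((z : ℤ) - ((C : ℤ) - (y : ℤ)))
        = (n * C).choose z :=
    calc _ = ∑ y ∈ range (C + 1), f (C + 1 - 1 - y) := by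
          refine sum_congr rfl fun y hy => ?_
          have hyC : y ≤ C := by simpa [Nat.lt_succ_iff] using hy
          rw [show C + 1 - 1 - y = C - y by omega]
          simp only [f, Nat.cast_sub hyC]
      _ = ∑ j ∈ range (C + 1), f j := sum_range_reflect f (C + 1)
      _ = (C + (n * C - C)).choose z := sum_range_choose_mul_chooseZ C (n * C - C) z
      _ = (n * C).choose z := by rw [Nat.add_sub_cancel' (Nat.le_mul_of_pos_left C hn)]
  have hD : (0 : ℝ) < ((n * C).choose z : ℕ) := by exact_mod_cast Nat.choose_pos hz
  simp only [hypergeomLaw, ← sum_div, ← Nat.cast_sum, hnum]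
  exact div_self hD.ne'

lemma le_one (hn : 1 ≤ n) (hz : z ≤ n * C) {y : ℕ} (hy : y ≤ C) :
    hypergeomLaw C n z y ≤ 1 :=
  sum_range hn hz ▸ single_le_sum (fun i _ => nonneg i) (mem_range.mpr (by omega))

end hypergeomLaw

def IsDiracAt (f : ℕ → ℝ) (y₀ : ℕ) : Prop :=
  f y₀ = 1 ∧ ∀ y, y ≠ y₀ → f y = 0

lemma IsDiracAt.nonneg {f : ℕ → ℝ} {y₀ : ℕ} (hf : IsDiracAt f y₀) (y : ℕ) : 0 ≤ f y := by
  rcases eq_or_ne y y₀ with rfl | hy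
  · rw [hf.1]; exact zero_le_one
  · rw [hf.2 y hy]

section Layers

variable {L C m : ℕ} {p : ℕ → ℝ} {r : ℕ → ℕ → ℝ}

lemma layer_nonneg (hlow : ∀ l, 1 ≤ l → l ≤ m - 1 → IsDiracAt (r l) 0)
    (hhigh : ∀ l, m + 1 ≤ l → l ≤ L → IsDiracAt (r l) C) (hp : ∀ l ∈ Icc 1 L, 0 ≤ p l)
    {y : ℕ} (hrm : 0 ≤ r m y) {l : ℕ} (hl : l ∈ Icc 1 L) : 0 ≤ p l * r l y := by
  obtain ⟨hl1, hlL⟩ := mem_Icc.mp hl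
  refine mul_nonneg (hp l hl) ?_
  rcases lt_trichotomy l m with hlm | rfl | hlm
  · exact (hlow l hl1 (by omega)).nonneg y
  · exact hrm
  · exact (hhigh l hlm hlL).nonneg y

theorem sup'_layers_zero (hne : (Icc 1 L).Nonempty) (hm : 2 ≤ m) (hmL : m ≤ L) (hC : C ≠ 0)
    (hlow : ∀ l, 1 ≤ l → l ≤ m - 1 → IsDiracAt (r l) 0)
    (hhigh : ∀ l, m + 1 ≤ l → l ≤ L → IsDiracAt (r l) C) (hp : ∀ l ∈ Icc 1 L, 0 ≤ p l)
    (hanti : AntitoneOn p (Icc 1 L)) (hrm : r m 0 ≤ 1) :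
    (Icc 1 L).sup' hne (fun l => p l * r l 0) = p 1 := by
  have h1 : 1 ∈ Icc 1 L := mem_Icc.mpr ⟨le_rfl, by omega⟩
  refine le_antisymm (sup'_le _ _ fun l hl => ?_) ?_
  · obtain ⟨hl1, hlL⟩ := mem_Icc.mp hl
    rcases lt_trichotomy l m with hlm | rfl | hlm
    · rw [(hlow l hl1 (by omega)).1, mul_one]
      exact hanti h1 hl hl1
    · exact (mul_le_of_le_one_right (hp l hl) hrm).trans (hanti h1 hl hl1)
    · rw [(hhigh l hlm hlL).2 0 hC.symm, mul_zero]
      exact hp 1 h1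
  · exact le_sup'_of_le _ h1 (by rw [(hlow 1 le_rfl (by omega)).1, mul_one])

theorem sup'_layers_last (hne : (Icc 1 L).Nonempty) (hm : 1 ≤ m) (hmL : m + 1 ≤ L)
    (hC : C ≠ 0) (hlow : ∀ l, 1 ≤ l → l ≤ m - 1 → IsDiracAt (r l) 0)
    (hhigh : ∀ l, m + 1 ≤ l → l ≤ L → IsDiracAt (r l) C) (hp : ∀ l ∈ Icc 1 L, 0 ≤ p l)
    (hanti : AntitoneOn p (Icc 1 L)) :
    (Icc 1 L).sup' hne (fun l => p l * r l C) = max (p m * r m C) (p (m + 1)) := by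
  have hm' : m ∈ Icc 1 L := mem_Icc.mpr ⟨hm, by omega⟩
  have hm1 : m + 1 ∈ Icc 1 L := mem_Icc.mpr ⟨by omega, hmL⟩
  have hrm1 : r (m + 1) C = 1 := (hhigh (m + 1) le_rfl hmL).1
  refine le_antisymm (sup'_le _ _ fun l hl => ?_) (max_le (le_sup' (fun l => p l * r l C) hm') ?_)
  · obtain ⟨hl1, hlL⟩ := mem_Icc.mp hl
    rcases lt_trichotomy l m with hlm | rfl | hlm
    · rw [(hlow l hl1 (by omega)).2 C hC, mul_zero]
      exact le_max_of_le_right (hp (m + 1) hm1)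
    · exact le_max_left _ _
    · rw [(hhigh l hlm hlL).1, mul_one]
      exact le_max_of_le_right (hanti hm1 hl hlm)
  · exact le_sup'_of_le _ hm1 (by rw [hrm1, mul_one])

theorem sup'_layers_of_ne (hne : (Icc 1 L).Nonempty) (hm : m ∈ Icc 1 L) {y : ℕ}
    (hy0 : y ≠ 0) (hyC : y ≠ C) (hlow : ∀ l, 1 ≤ l → l ≤ m - 1 → IsDiracAt (r l) 0)
    (hhigh : ∀ l, m + 1 ≤ l → l ≤ L → IsDiracAt (r l) C) (hpm : 0 ≤ p m) (hrm : 0 ≤ r m y) :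
    (Icc 1 L).sup' hne (fun l => p l * r l y) = p m * r m y := by
  refine le_antisymm (sup'_le _ _ fun l hl => ?_) (le_sup' (fun l => p l * r l y) hm)
  obtain ⟨hl1, hlL⟩ := mem_Icc.mp hl
  rcases lt_trichotomy l m with hlm | rfl | hlm
  · rw [(hlow l hl1 (by omega)).2 y hy0, mul_zero]
    exact mul_nonneg hpm hrm
  · exact le_rfl
  · rw [(hhigh l hlm hlL).2 y hyC, mul_zero]
    exact mul_nonneg hpm hrm

end Layers

theorem stmt15_general (K L C m : ℕ) (hC : 1 ≤ C)
    (hm2 : 2 ≤ m) (hmL : m ≤ L - 1)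
    (pg : Fin K → ℝ) (hpg0 : ∀ k, 0 ≤ pg k)
    (pstar : ℕ → ℝ)
    (hpstar0 : ∀ l ∈ Finset.Icc 1 L, 0 ≤ pstar l)
    (hpmono : ∀ l l' : ℕ, 1 ≤ l → l ≤ l' → l' ≤ L → pstar l' ≤ pstar l)
    (nm zm : ℕ) (hnm : 1 ≤ nm) (hzm : zm ≤ nm * C)
    (r : ℕ → ℕ → ℝ)
    (hrlow : ∀ l : ℕ, 1 ≤ l → l ≤ m - 1 →
      r l 0 = 1 ∧ ∀ y : ℕ, y ≠ 0 → r l y = 0)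
    (hrhigh : ∀ l : ℕ, m + 1 ≤ l → l ≤ L →
      r l C = 1 ∧ ∀ y : ℕ, y ≠ C → r l y = 0)
    (hrm : ∀ y : ℕ, y ≤ C →
      r m y = ((C.choose (C - y)
          * chooseZ (nm * C - C) ((zm : ℤ) - ((C : ℤ) - (y : ℤ))) : ℕ) : ℝ)
        / (((nm * C).choose zm : ℕ) : ℝ))
    (hne : ((Finset.Icc 1 L) ×ˢ (Finset.univ : Finset (Fin K))).Nonempty)
    (hneK : (Finset.univ : Finset (Fin K)).Nonempty) :
    1 - ∑ y ∈ Finset.range (C + 1),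
        ((Finset.Icc 1 L) ×ˢ (Finset.univ : Finset (Fin K))).sup' hne
          (fun lk : ℕ × Fin K => pg lk.2 * pstar lk.1 * r lk.1 y)
      = 1 - pstar 1 * (Finset.univ.sup' hneK pg)
        - max
            ((((nm * C - C).choose zm : ℕ) : ℝ)
                / (((nm * C).choose zm : ℕ) : ℝ)
              * pstar m * (Finset.univ.sup' hneK pg))
            (pstar (m + 1) * (Finset.univ.sup' hneK pg))
        - pstar m * (Finset.univ.sup' hneK pg)
          * (1 - ((chooseZ (nm * C - C) ((zm : ℤ) - (C : ℤ))
              + (nm * C - C).choose zm : ℕ) : ℝ)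
            / (((nm * C).choose zm : ℕ) : ℝ)) := by
  set P := univ.sup' hneK pg
  set M : ℕ → ℝ := fun y => (Icc 1 L).sup' hne.fst fun l => pstar l * r l y
  have hrm' : ∀ y ≤ C, r m y = hypergeomLaw C nm zm y := hrm
  have hanti : AntitoneOn pstar (Icc 1 L) := fun l hl l' hl' hll' =>
    hpmono l l' (mem_Icc.mp hl).1 hll' (mem_Icc.mp hl').2
  have hP : 0 ≤ P := (hpg0 hneK.choose).trans (le_sup' pg hneK.choose_spec)
  have hm : m ∈ Icc 1 L := mem_Icc.mpr ⟨by omega, by omega⟩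
  have hsum_rm : ∑ y ∈ range (C + 1), r m y = 1 := by
    rw [← hypergeomLaw.sum_range hnm hzm]
    exact sum_congr rfl fun y hy => hrm' y (by simpa [Nat.lt_succ_iff] using hy)
  have hfactor : ∀ y ∈ range (C + 1), (Icc 1 L ×ˢ univ).sup' hne
      (fun lk : ℕ × Fin K => pg lk.2 * pstar lk.1 * r lk.1 y) = P * M y := by
    intro y hy
    simp_rw [mul_assoc]
    refine sup'_product_mul_of_nonneg hne (fun l => pstar l * r l y) pg (fun l hl => ?_) hP
    refine layer_nonneg hrlow hrhigh hpstar0 ?_ hl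
    rw [hrm' y (by simpa [Nat.lt_succ_iff] using hy)]
    exact hypergeomLaw.nonneg y
  have hM : ∑ y ∈ range (C + 1), M y
      = ∑ y ∈ range (C + 1), pstar m * r m y + (M 0 - pstar m * r m 0)
        + (M C - pstar m * r m C) := by
    refine sum_eq_sum_add_of_eq_off_pair (by simp) (by simp) (by omega) fun y hy hy0 hyC => ?_
    refine sup'_layers_of_ne hne.fst hm hy0 hyC hrlow hrhigh (hpstar0 m hm) ?_
    rw [hrm' y (by simpa [Nat.lt_succ_iff] using hy)]
    exact hypergeomLaw.nonneg y
  have hM0 : M 0 = pstar 1 :=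
    sup'_layers_zero hne.fst hm2 (by omega) (by omega) hrlow hrhigh hpstar0 hanti
      (hrm' 0 (Nat.zero_le C) ▸ hypergeomLaw.le_one hnm hzm (Nat.zero_le C))
  have hMC : M C = max (pstar m * r m C) (pstar (m + 1)) :=
    sup'_layers_last hne.fst (by omega) (by omega) (by omega) hrlow hrhigh hpstar0 hanti
  rw [sum_congr rfl hfactor, ← mul_sum, hM, ← mul_sum, hsum_rm, hM0, hMC, mul_comm (pstar m) (r m C), hrm' 0 (Nat.zero_le C),
    hrm' C le_rfl, hypergeomLaw.apply_zero, hypergeomLaw.apply_self, ← max_mul_of_nonneg _ _ hP]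
  push_cast
  ring

/-- Minimum privacy degree of SPC (subsets indexed `1,…,L`, popularities of
the subsets' most popular files nonincreasing): for the deterministic
placement caching subsets `S_1,…,S_{m−1}` entirely, `z_m` uniformly random
chunks of the `n_m·C` chunks of `S_m`, and nothing from `S_{m+1},…,S_L`, the
privacy degree `Ψ = 1 − ∑_{y=0}^{C} max_{l,k} pg_k·p*_l·r_l(y)` equals
`1 − p*_1·pg^max − max{ ((n_mC−C choose z_m)/(n_mC choose z_m))·p*_m·pg^max,
p*_{m+1}·pg^max } − p*_m·pg^max·(1 − ((n_mC−C choose z_m−C) +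
(n_mC−C choose z_m))/(n_mC choose z_m))`. -/
theorem stmt15 (K L C m : ℕ) (hK : 1 ≤ K) (hL : 3 ≤ L) (hC : 1 ≤ C)
    (hm2 : 2 ≤ m) (hmL : m ≤ L - 1)
    (pg : Fin K → ℝ) (hpg0 : ∀ k, 0 ≤ pg k)
    (pstar : ℕ → ℝ)
    (hpstar0 : ∀ l ∈ Finset.Icc 1 L, 0 ≤ pstar l)
    (hpmono : ∀ l l' : ℕ, 1 ≤ l → l ≤ l' → l' ≤ L → pstar l' ≤ pstar l)
    (nm zm : ℕ) (hnm : 1 ≤ nm) (hzm0 : 0 < zm) (hzm : zm ≤ nm * C)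
    (r : ℕ → ℕ → ℝ)
    (hrlow : ∀ l : ℕ, 1 ≤ l → l ≤ m - 1 →
      r l 0 = 1 ∧ ∀ y : ℕ, y ≠ 0 → r l y = 0)
    (hrhigh : ∀ l : ℕ, m + 1 ≤ l → l ≤ L →
      r l C = 1 ∧ ∀ y : ℕ, y ≠ C → r l y = 0)
    (hrm : ∀ y : ℕ, y ≤ C →
      r m y = ((C.choose (C - y)
          * chooseZ (nm * C - C) ((zm : ℤ) - ((C : ℤ) - (y : ℤ))) : ℕ) : ℝ)
        / (((nm * C).choose zm : ℕ) : ℝ))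
    (hne : ((Finset.Icc 1 L) ×ˢ (Finset.univ : Finset (Fin K))).Nonempty)
    (hneK : (Finset.univ : Finset (Fin K)).Nonempty) :
    1 - ∑ y ∈ Finset.range (C + 1),
        ((Finset.Icc 1 L) ×ˢ (Finset.univ : Finset (Fin K))).sup' hne
          (fun lk : ℕ × Fin K => pg lk.2 * pstar lk.1 * r lk.1 y)
      = 1 - pstar 1 * (Finset.univ.sup' hneK pg)
        - max
            ((((nm * C - C).choose zm : ℕ) : ℝ)
                / (((nm * C).choose zm : ℕ) : ℝ)
              * pstar m * (Finset.univ.sup' hneK pg))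
            (pstar (m + 1) * (Finset.univ.sup' hneK pg))
        - pstar m * (Finset.univ.sup' hneK pg)
          * (1 - ((chooseZ (nm * C - C) ((zm : ℤ) - (C : ℤ))
              + (nm * C - C).choose zm : ℕ) : ℝ)
            / (((nm * C).choose zm : ℕ) : ℝ)) :=
  stmt15_general K L C m hC hm2 hmL pg hpg0 pstar hpstar0 hpmono nm zm hnm hzm r hrlow hrhigh hrm
    hne hneK
end
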